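/- arXiv:1801.04424 — 6 statements merged into one kernel-verified Lean document; each statement's English description precedes it below -/
import Mathlib

section
/- Let U be an ultrafilter over a set I and let h : I → I be a function such that h_*(U) = U. Then the set of fixed points {x ∈ I : h(x) = x} belongs to U. -/
open Filter

lemma fin3_avoid : ∀ a b : Fin 3, ∃ z : Fin 3, z ≠ a ∧ z ≠ b := by decide

-- a finite "vertex set" admits a vertex of in-degree ≤ 1
lemma exists_small_indeg {I : Type*} [DecidableEq I] (h : I → I) (V : Finset I)
    (hV : V.Nonempty) :
    ∃ v ∈ V, (V.filter (fun x => h x = v ∧ x ≠ v)).card ≤ 1 := by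
  by_contra hcon
  push_neg at hcon
  set s := V.filter (fun x => h x ∈ V ∧ h x ≠ x) with hs
  have hsub : ∀ x ∈ s, h x ∈ V := by
    intro x hx; exact (Finset.mem_filter.1 hx).2.1
  have hcard := Finset.card_eq_sum_card_fiberwise hsub
  have hsV : s.card ≤ V.card := Finset.card_le_card (Finset.filter_subset _ _)
  have hfib : ∀ v ∈ V, (V.filter (fun x => h x = v ∧ x ≠ v)) = s.filter (fun x => h x = v) := by
    intro v hv
    ext x
    simp only [Finset.mem_filter, hs]
    constructor
    · rintro ⟨hxV, hxv, hxne⟩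
      exact ⟨⟨hxV, hxv ▸ hv, by rw [hxv]; exact fun e => hxne e.symm⟩, hxv⟩
    · rintro ⟨⟨hxV, _, hne⟩, hxv⟩
      exact ⟨hxV, hxv, fun e => hne (by rw [hxv, e])⟩
  have h2 : 2 * V.card ≤ s.card := by
    rw [hcard]
    calc 2 * V.card = ∑ _v ∈ V, 2 := by rw [Finset.sum_const, smul_eq_mul, mul_comm]
    _ ≤ ∑ v ∈ V, (s.filter (fun x => h x = v)).card := by
        apply Finset.sum_le_sum
        intro v hv
        rw [← hfib v hv]
        exact hcon v hv
  have := hV.card_pos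
  omega

lemma finite_coloring {I : Type*} [DecidableEq I] (h : I → I) (V : Finset I) :
    ∃ c : I → Fin 3, ∀ x ∈ V, h x ∈ V → h x ≠ x → c x ≠ c (h x) := by
  induction V using Finset.strongInduction with
  | _ V IH =>
    rcases V.eq_empty_or_nonempty with rfl | hV
    · exact ⟨fun _ => 0, by simp⟩
    obtain ⟨v, hvV, hdeg⟩ := exists_small_indeg h V hV
    obtain ⟨c, hc⟩ := IH (V.erase v) (Finset.erase_ssubset hvV)
    set N := V.filter (fun x => h x = v ∧ x ≠ v) with hN
    classical
    set w := if hn : N.Nonempty then hn.choose else v with hw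
    obtain ⟨z, hz1, hz2⟩ := fin3_avoid (c (h v)) (c w)
    refine ⟨Function.update c v z, ?_⟩
    intro x hxV hhxV hne
    rcases eq_or_ne x v with rfl | hxv
    · rw [Function.update_self, Function.update_of_ne hne]
      exact fun e => hz1 e
    · rcases eq_or_ne (h x) v with hxv2 | hxv2
      · -- x is an in-neighbor of v, so x = w
        have hxN : x ∈ N := Finset.mem_filter.2 ⟨hxV, hxv2, hxv⟩
        have hnN : N.Nonempty := ⟨x, hxN⟩
        have hwN : w ∈ N := by rw [hw, dif_pos hnN]; exact hnN.choose_spec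
        have hxw : x = w := by
          have := Finset.card_le_one.1 hdeg
          exact this x hxN w hwN
        have hwv : x ≠ v := hxv
        rw [Function.update_of_ne hxv, hxv2, Function.update_self, hxw]
        exact fun e => hz2 e.symm
      · rw [Function.update_of_ne hxv, Function.update_of_ne hxv2]
        exact hc x (Finset.mem_erase.2 ⟨hxv, hxV⟩) (Finset.mem_erase.2 ⟨hxv2, hhxV⟩) hne
open Filter

lemma uf_fin3' {α : Type*} (W : Ultrafilter α) (f : α → Fin 3) :
    ∃ a : Fin 3, {y | f y = a} ∈ W := by
  by_contra hcon
  push_neg at hcon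
  have h0 := (Ultrafilter.compl_mem_iff_notMem.2 (hcon 0))
  have h1 := (Ultrafilter.compl_mem_iff_notMem.2 (hcon 1))
  have h2 := (Ultrafilter.compl_mem_iff_notMem.2 (hcon 2))
  obtain ⟨y, ⟨hy0, hy1⟩, hy2⟩ :=
    Ultrafilter.nonempty_of_mem (inter_mem (inter_mem h0 h1) h2)
  have : ∀ a : Fin 3, a = 0 ∨ a = 1 ∨ a = 2 := by decide
  rcases this (f y) with h | h | h
  · exact hy0 h
  · exact hy1 h
  · exact hy2 h

-- global 3-coloring of the functional graph, given finite colorings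
lemma global_coloring {I : Type*} [Nonempty I] (h : I → I)
    (fin : ∀ V : Finset I, ∃ c : I → Fin 3, ∀ x ∈ V, h x ∈ V → h x ≠ x → c x ≠ c (h x)) :
    ∃ c : I → Fin 3, ∀ x, h x ≠ x → c x ≠ c (h x) := by
  classical
  set cF : Finset I → I → Fin 3 := fun V => (fin V).choose with hcF
  have hcFspec : ∀ V : Finset I, ∀ x ∈ V, h x ∈ V → h x ≠ x → cF V x ≠ cF V (h x) :=
    fun V => (fin V).choose_spec
  set W : Ultrafilter (Finset I) := Ultrafilter.of atTop with hW
  have hWle : (W : Filter (Finset I)) ≤ atTop := Ultrafilter.of_le atTop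
  choose c hc using fun x => uf_fin3' W (fun V => cF V x)
  refine ⟨c, fun x hx => ?_⟩
  have hS1 : {V | cF V x = c x} ∈ W := hc x
  have hS2 : {V | cF V (h x) = c (h x)} ∈ W := hc (h x)
  have hS3 : {V : Finset I | {x, h x} ≤ V} ∈ W := hWle (mem_atTop _)
  obtain ⟨V, ⟨hV1, hV2⟩, hV3⟩ :=
    Ultrafilter.nonempty_of_mem (inter_mem (inter_mem hS1 hS2) hS3)
  have hxV : x ∈ V := hV3 (by simp)
  have hhxV : h x ∈ V := hV3 (by simp)
  intro e
  exact hcFspec V x hxV hhxV hx (by rw [hV1, hV2, e])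

/-- If `U` is an ultrafilter over `I` and `h : I → I` satisfies `h_*(U) = U`
(the Rudin–Keisler projection of `U` by `h` is `U` itself), then the set of
fixed points of `h` belongs to `U`. -/
theorem fixedPoints_mem_of_map_self {I : Type*} (U : Ultrafilter I) (h : I → I)
    (hmap : Ultrafilter.map h U = U) : {x : I | h x = x} ∈ U := by
  classical
  have : Nonempty I := Filter.nonempty_of_neBot U
  by_contra hD
  have hDmem : {x : I | h x ≠ x} ∈ U := Ultrafilter.compl_mem_iff_notMem.2 hD
  obtain ⟨c, hc⟩ := global_coloring h (finite_coloring h)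
  obtain ⟨a, ha⟩ := uf_fin3' U c
  have hpre : {x : I | c (h x) = a} ∈ U := by
    have : {y : I | c y = a} ∈ Ultrafilter.map h U := by rw [hmap]; exact ha
    exact this
  obtain ⟨x, ⟨hx1, hx2⟩, hx3⟩ :=
    Ultrafilter.nonempty_of_mem (inter_mem (inter_mem ha hpre) hDmem)
  exact hc x hx3 (hx1.trans hx2.symm)
end

section
/- Let U be an ultrafilter over a set I and W an ultrafilter over a set J, and assume |I| = |J|. Then U ≡_RK W if and only if there is a bijection f : J → I with f_*(W) = U. -/
universe u

open Function Set

private theorem rkAux_fin3_exists (a b : Fin 3) : ∃ d : Fin 3, d ≠ a ∧ d ≠ b := by revert a b; decide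

/-- Any finite functional graph is 3-colorable. -/
private theorem rkAux_finite_coloring :
    ∀ (n : ℕ) {V : Type u} [Fintype V],
    Fintype.card V ≤ n → ∀ h : V → V, ∃ c : V → Fin 3, ∀ x, h x ≠ x → c (h x) ≠ c x := by
  intro n
  induction n with
  | zero =>
    intro V _ hcard h
    have : IsEmpty V := by
      rw [← Fintype.card_eq_zero_iff]; omega
    exact ⟨fun _ => 0, fun x => (this.false x).elim⟩
  | succ n ih =>
    intro V _ hcard h
    classical
    rcases isEmpty_or_nonempty V with hV | hV
    · exact ⟨fun _ => 0, fun x => (hV.false x).elim⟩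
    by_cases hex : ∃ x : V, ∀ y, y ≠ x → h y ≠ x
    · obtain ⟨x, hx⟩ := hex
      have hlt : Fintype.card {y : V // y ≠ x} < Fintype.card V :=
        Fintype.card_subtype_lt (x := x) (by simp)
      obtain ⟨c', hc'⟩ := ih (by omega) (fun y : {y : V // y ≠ x} => ⟨h y, hx y y.2⟩)
      refine ⟨fun y =>
        if hy : y = x then (if hxx : h x = x then 0 else c' ⟨h x, hxx⟩ + 1)
        else c' ⟨y, hy⟩, ?_⟩
      intro y hy
      by_cases hyx : y = x
      · subst hyx
        simp only [dif_neg hy, dif_pos]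
        exact fun e => (by decide : ∀ a : Fin 3, a + 1 ≠ a) _ e.symm
      · have hhy : h y ≠ x := hx y hyx
        simp only [dif_neg hhy, dif_neg hyx]
        exact hc' ⟨y, hyx⟩ (fun e => hy (congrArg Subtype.val e))
    · push_neg at hex
      have hsurj : Surjective h := fun x => ⟨(hex x).choose, (hex x).choose_spec.2⟩
      have hinj : Injective h := Finite.injective_iff_surjective.mpr hsurj
      have hnofix : ∀ z, h z ≠ z := by
        intro z hz
        obtain ⟨y, hy, hyz⟩ := hex z
        exact hy (hinj (hyz.trans hz.symm))
      obtain ⟨x⟩ := hV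
      obtain ⟨p, hpne, hp⟩ := hex x
      have hs : h x ≠ x := hnofix x
      have hlt : Fintype.card {y : V // y ≠ x} < Fintype.card V :=
        Fintype.card_subtype_lt (x := x) (by simp)
      have hkey : ∀ y : V, y ≠ x → y ≠ p → h y ≠ x := by
        intro y _ hyp e
        exact hyp (hinj (e.trans hp.symm))
      obtain ⟨c', hc'⟩ := ih (by omega)
        (fun y : {y : V // y ≠ x} =>
          if hyp : (y : V) = p then (if hsp : h x = p then y else ⟨h x, hs⟩)
          else ⟨h y, hkey y y.2 hyp⟩)
      obtain ⟨d, hd1, hd2⟩ := rkAux_fin3_exists (c' ⟨p, hpne⟩) (c' ⟨h x, hs⟩)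
      refine ⟨fun y => if hy : y = x then d else c' ⟨y, hy⟩, ?_⟩
      intro y _
      by_cases hyx : y = x
      · subst hyx
        simp only [dif_pos, dif_neg hs]
        exact fun e => hd2 e.symm
      · simp only [dif_neg hyx]
        by_cases hhy : h y = x
        · have hyp : y = p := hinj (hhy.trans hp.symm)
          subst hyp
          simp only [hhy, dif_pos]
          exact fun e => hd1 e
        · have hyp : y ≠ p := fun e => hhy (e ▸ hp)
          simp only [dif_neg hhy]
          have := hc' ⟨y, hyx⟩ (by
            simp only [dif_neg hyp]
            exact fun e => hnofix y (congrArg Subtype.val e))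
          simpa only [dif_neg hyp] using this

/-- Any functional graph is 3-colorable (de Bruijn–Erdős compactness). -/
private theorem rkAux_coloring {I : Type u} (h : I → I) :
    ∃ c : I → Fin 3, ∀ x, h x ≠ x → c (h x) ≠ c x := by
  classical
  let G : SimpleGraph I :=
    { Adj := fun x y => x ≠ y ∧ (h x = y ∨ h y = x)
      symm := ⟨fun x y ⟨hne, hor⟩ => ⟨hne.symm, hor.symm⟩⟩
      loopless := ⟨fun x ⟨hne, _⟩ => hne rfl⟩ }
  have key : ∀ G' : G.Subgraph, G'.verts.Finite →
      (G'.coe →g (⊤ : SimpleGraph (Fin 3))) := by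
    intro G' hfin
    haveI : Fintype G'.verts := hfin.fintype
    set h' : G'.verts → G'.verts :=
      fun y => if hy : h y ∈ G'.verts then ⟨h y, hy⟩ else y with hh'
    have hcex := rkAux_finite_coloring (Fintype.card G'.verts) le_rfl h'
    set c := hcex.choose with hcdef
    have hc := hcex.choose_spec
    refine ⟨c, ?_⟩
    intro a b hab
    have hGab : G.Adj a b := G'.adj_sub hab
    obtain ⟨hne, hor⟩ := hGab
    have hne' : a ≠ b := fun e => hne (congrArg Subtype.val e)
    simp only [SimpleGraph.top_adj]
    rcases hor with hab' | hab'
    · have h'a : h' a = b := by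
        rw [hh']
        simp only [hab']
        rw [dif_pos b.2]
      have := hc a (by rw [h'a]; exact hne'.symm)
      rw [h'a] at this
      exact this.symm
    · have h'b : h' b = a := by
        rw [hh']
        simp only [hab']
        rw [dif_pos a.2]
      have := hc b (by rw [h'b]; exact hne')
      rw [h'b] at this
      exact this
  obtain ⟨F⟩ := SimpleGraph.nonempty_hom_of_forall_finite_subgraph_hom key
  refine ⟨F, fun x hx => ?_⟩
  have hadj : G.Adj x (h x) := ⟨fun e => hx e.symm, Or.inl rfl⟩
  have := F.map_rel hadj
  rw [SimpleGraph.top_adj] at this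
  exact this.symm

/-- The fixed-point lemma: if an ultrafilter is fixed by `map h`, then `h` is the
identity on a large set. -/
private theorem rkAux_fixed {I : Type u} (U : Ultrafilter I) (h : I → I)
    (hm : Ultrafilter.map h U = U) : {x | h x = x} ∈ U := by
  by_contra hcon
  have hA : {x | h x ≠ x} ∈ U := by
    have := Ultrafilter.compl_mem_iff_notMem.mpr hcon
    simpa [compl_setOf] using this
  obtain ⟨c, hc⟩ := rkAux_coloring h
  have hexi : ∃ i : Fin 3, {x | c x = i} ∈ U := by
    by_contra hno
    push_neg at hno
    have hcompl : ∀ i : Fin 3, {x | c x = i}ᶜ ∈ U := fun i =>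
      Ultrafilter.compl_mem_iff_notMem.mpr (hno i)
    have hmem : ({x | c x = 0}ᶜ ∩ ({x | c x = 1}ᶜ ∩ {x | c x = 2}ᶜ) : Set I) ∈ U :=
      Filter.inter_mem (hcompl 0) (Filter.inter_mem (hcompl 1) (hcompl 2))
    obtain ⟨x, hx0, hx1, hx2⟩ := Ultrafilter.nonempty_of_mem hmem
    have htri : ∀ a : Fin 3, a = 0 ∨ a = 1 ∨ a = 2 := by decide
    rcases htri (c x) with e | e | e
    · exact hx0 e
    · exact hx1 e
    · exact hx2 e
  obtain ⟨i, hi⟩ := hexi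
  have hC : ({x | h x ≠ x} ∩ {x | c x = i} : Set I) ∈ U := Filter.inter_mem hA hi
  have hpre : h ⁻¹' ({x | h x ≠ x} ∩ {x | c x = i}) ∈ U := by
    rw [← Ultrafilter.mem_map, hm]; exact hC
  obtain ⟨x, ⟨hx1, hx2⟩, _, hx4⟩ := Ultrafilter.nonempty_of_mem (Filter.inter_mem hC hpre)
  exact hc x hx1 (hx4.trans hx2.symm)

open Cardinal in
/-- Given a large set on which `f ∘ g = id` whose image-complement is equinumerous with its
complement, we can upgrade `f` to a bijection inducing the same ultrafilter map. -/
private theorem rkAux_build {I J : Type u} (U : Ultrafilter I) (W : Ultrafilter J)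
    (g : I → J) (f : J → I) (hg : Ultrafilter.map g U = W) (hf : Ultrafilter.map f W = U)
    (A : Set I) (hA : A ∈ U) (hfg : ∀ a ∈ A, f (g a) = a)
    (hcompl : #(↥(g '' A)ᶜ) = #(↥(Aᶜ))) :
    ∃ F : J → I, Bijective F ∧ Ultrafilter.map F W = U := by
  classical
  have hB : g '' A ∈ W := by
    rw [← hg, Ultrafilter.mem_map]
    exact Filter.mem_of_superset hA (fun a ha => Set.mem_image_of_mem g ha)
  have hfmem : ∀ b : ↥(g '' A), f ↑b ∈ A := by
    rintro ⟨b, hb⟩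
    obtain ⟨a, ha, rfl⟩ := hb
    rw [hfg a ha]; exact ha
  let eBA : ↥(g '' A) ≃ ↥A :=
    { toFun := fun b => ⟨f ↑b, hfmem b⟩
      invFun := fun a => ⟨g ↑a, Set.mem_image_of_mem g a.2⟩
      left_inv := by
        rintro ⟨b, hb⟩
        obtain ⟨a, ha, rfl⟩ := hb
        simp only [Subtype.mk.injEq]
        exact Subtype.ext (congrArg g (hfg a ha))
      right_inv := by
        rintro ⟨a, ha⟩
        simp only [Subtype.mk.injEq]
        exact hfg a ha }
  have eC : ↥(g '' A)ᶜ ≃ ↥(Aᶜ) := Classical.choice (Cardinal.eq.mp hcompl)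
  let E : J ≃ I := (Equiv.Set.sumCompl (g '' A)).symm.trans
    ((eBA.sumCongr eC).trans (Equiv.Set.sumCompl A))
  have hEf : ∀ y ∈ g '' A, E y = f y := by
    intro y hy
    show (Equiv.Set.sumCompl A) ((eBA.sumCongr eC) ((Equiv.Set.sumCompl (g '' A)).symm y)) = f y
    rw [Equiv.Set.sumCompl_symm_apply_of_mem hy]
    rfl
  refine ⟨E, E.bijective, ?_⟩
  have : Ultrafilter.map (E : J → I) W = Ultrafilter.map f W := by
    apply Ultrafilter.coe_injective
    rw [Ultrafilter.coe_map, Ultrafilter.coe_map]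
    apply Filter.map_congr
    exact Filter.eventuallyEq_of_mem hB hEf
  rw [this, hf]

open Cardinal in
/-- In an infinite set, every ultrafilter contains a set whose complement has full
cardinality. -/
private theorem rkAux_shrink {I : Type u} (U : Ultrafilter I) (hinf : ℵ₀ ≤ #I) :
    ∃ P ∈ U, #(↥(Pᶜ)) = #I := by
  have hsum : #(I ⊕ I) = #I := by
    rw [Cardinal.mk_sum, Cardinal.lift_id, Cardinal.add_eq_self hinf]
  have e : (I ⊕ I) ≃ I := Classical.choice (Cardinal.eq.mp hsum)
  set I₁ : Set I := Set.range (e ∘ Sum.inl) with hI₁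
  have hcomplI₁ : I₁ᶜ = Set.range (e ∘ Sum.inr) := by
    ext x
    simp only [Set.mem_compl_iff, hI₁, Set.mem_range, comp_apply]
    constructor
    · intro hx
      rcases hz : e.symm x with z | z
      · exact absurd ⟨z, by rw [← hz, e.apply_symm_apply]⟩ hx
      · exact ⟨z, by rw [← hz, e.apply_symm_apply]⟩
    · rintro ⟨z, rfl⟩ ⟨w, hw⟩
      exact Sum.inl_ne_inr (e.injective hw)
  have hmk₁ : #(↥I₁) = #I :=
    Cardinal.mk_range_eq _ (e.injective.comp Sum.inl_injective)
  have hmk₂ : #(↥(I₁ᶜ)) = #I := by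
    rw [hcomplI₁]
    exact Cardinal.mk_range_eq _ (e.injective.comp Sum.inr_injective)
  by_cases h1 : I₁ ∈ U
  · exact ⟨I₁, h1, hmk₂⟩
  · refine ⟨I₁ᶜ, Ultrafilter.compl_mem_iff_notMem.mpr h1, ?_⟩
    rw [compl_compl]
    exact hmk₁

/-- Rudin–Keisler equivalence via a bijection: if `U` is an ultrafilter over `I`,
`W` an ultrafilter over `J`, and `|I| = |J|`, then `U ≡_RK W` (i.e. `W` is a
Rudin–Keisler projection of `U` and `U` is a Rudin–Keisler projection of `W`)
if and only if there is a bijection `f : J → I` with `f_*(W) = U`. -/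
theorem rk_equiv_iff_bijection {I J : Type u} (U : Ultrafilter I) (W : Ultrafilter J)
    (hcard : Cardinal.mk I = Cardinal.mk J) :
    ((∃ g : I → J, Ultrafilter.map g U = W) ∧ (∃ f : J → I, Ultrafilter.map f W = U)) ↔
      (∃ f : J → I, Function.Bijective f ∧ Ultrafilter.map f W = U) := by
  constructor
  · rintro ⟨⟨g, hg⟩, ⟨f, hf⟩⟩
    have hfgU : Ultrafilter.map (f ∘ g) U = U := by
      rw [← Ultrafilter.map_map, hg, hf]
    have hA₀ : {x | f (g x) = x} ∈ U := rkAux_fixed U (f ∘ g) hfgU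
    rcases lt_or_ge (Cardinal.mk I) Cardinal.aleph0 with hfin | hinf
    · -- finite case
      set A := {x : I | f (g x) = x} with hAdef
      have hfg : ∀ a ∈ A, f (g a) = a := fun a ha => ha
      have hinjOn : Set.InjOn g A := by
        intro a ha a' ha' he
        calc a = f (g a) := (hfg a ha).symm
          _ = f (g a') := by rw [he]
          _ = a' := hfg a' ha'
      have him : Cardinal.mk (↥(g '' A)) = Cardinal.mk (↥A) :=
        Cardinal.mk_image_eq_of_injOn g A hinjOn
      have h1 : Cardinal.mk (↥(g '' A)) + Cardinal.mk (↥(g '' A)ᶜ) = Cardinal.mk J :=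
        Cardinal.mk_sum_compl _
      have h2 : Cardinal.mk (↥A) + Cardinal.mk (↥(Aᶜ)) = Cardinal.mk I :=
        Cardinal.mk_sum_compl _
      have hcompl : Cardinal.mk (↥(g '' A)ᶜ) = Cardinal.mk (↥(Aᶜ)) := by
        apply Cardinal.eq_of_add_eq_add_left (a := Cardinal.mk (↥(g '' A)))
        · rw [h1, ← hcard, ← h2, him]
        · exact lt_of_le_of_lt (Cardinal.mk_set_le _) (hcard ▸ hfin)
      exact rkAux_build U W g f hg hf A hA₀ hfg hcompl
    · -- infinite case
      have hinfJ : Cardinal.aleph0 ≤ Cardinal.mk J := hcard ▸ hinf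
      obtain ⟨P, hP, hPc⟩ := rkAux_shrink U hinf
      obtain ⟨Q, hQ, hQc⟩ := rkAux_shrink W hinfJ
      have hgQ : g ⁻¹' Q ∈ U := by
        rw [← hg] at hQ
        exact Ultrafilter.mem_map.mp hQ
      set A := ({x : I | f (g x) = x} ∩ P) ∩ g ⁻¹' Q with hAdef
      have hA : A ∈ U := Filter.inter_mem (Filter.inter_mem hA₀ hP) hgQ
      have hfg : ∀ a ∈ A, f (g a) = a := fun a ha => ha.1.1
      have hAc : Cardinal.mk (↥(Aᶜ)) = Cardinal.mk I := by
        apply le_antisymm (Cardinal.mk_set_le _)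
        rw [← hPc]
        apply Cardinal.mk_le_mk_of_subset
        exact Set.compl_subset_compl.mpr (fun a ha => ha.1.2)
      have hBc : Cardinal.mk (↥(g '' A)ᶜ) = Cardinal.mk J := by
        apply le_antisymm (Cardinal.mk_set_le _)
        rw [← hQc]
        apply Cardinal.mk_le_mk_of_subset
        apply Set.compl_subset_compl.mpr
        rintro b ⟨a, ha, rfl⟩
        exact ha.2
      have hcompl : Cardinal.mk (↥(g '' A)ᶜ) = Cardinal.mk (↥(Aᶜ)) := by
        rw [hBc, ← hcard, ← hAc]
      exact rkAux_build U W g f hg hf A hA hfg hcompl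
  · rintro ⟨f, hbij, hf⟩
    refine ⟨⟨(Equiv.ofBijective f hbij).symm, ?_⟩, ⟨f, hf⟩⟩
    rw [← hf, Ultrafilter.map_map]
    have hid : (((Equiv.ofBijective f hbij).symm : I → J) ∘ f) = id := by
      funext y
      exact (Equiv.ofBijective f hbij).symm_apply_apply y
    rw [hid, Ultrafilter.map_id]
end

section
/- Let κ be a measurable cardinal and let U be a non-trivial κ-complete ultrafilter over κ. The following are equivalent: (1) U is ≤_RK-minimal among non-trivial κ-complete ultrafilters, i.e. every non-trivial κ-complete ultrafilter W over κ with W ≤_RK U satisfies W ≡_RK U; (2) U ≡_RK W for some normal ultrafilter W over κ; (3) U is Rowbottom; (4) U is Ramsey. -/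
/-- `U` is a (proper) filter over the cardinal `κ`, i.e. over the set of ordinals below `κ`. -/
def IsFilterOn (κ : Cardinal) (U : Set (Set Ordinal)) : Prop :=
  (∀ X ∈ U, X ⊆ Set.Iio κ.ord) ∧
  ∅ ∉ U ∧
  Set.Iio κ.ord ∈ U ∧
  (∀ X ∈ U, ∀ Y ∈ U, X ∩ Y ∈ U) ∧
  (∀ X ∈ U, ∀ Y : Set Ordinal, X ⊆ Y → Y ⊆ Set.Iio κ.ord → Y ∈ U)

/-- `U` is an ultrafilter over `κ`: for every `X ⊆ κ`, `X ∈ U` or `κ ∖ X ∈ U`. -/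
def IsUltrafilterOn (κ : Cardinal) (U : Set (Set Ordinal)) : Prop :=
  IsFilterOn κ U ∧ ∀ X ⊆ Set.Iio κ.ord, X ∈ U ∨ (Set.Iio κ.ord \ X) ∈ U

/-- `U` is `lam`-complete: the intersection of fewer than `lam` members of `U`
belongs to `U`. -/
def IsCompleteFilterOn (lam κ : Cardinal) (U : Set (Set Ordinal)) : Prop :=
  ∀ (ι : Type) (s : ι → Set Ordinal), Cardinal.mk ι < lam → (∀ i, s i ∈ U) →
    (Set.Iio κ.ord ∩ ⋂ i, s i) ∈ U

/-- `U` is trivial: some singleton belongs to `U`. -/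
def IsTrivialFilterOn (κ : Cardinal) (U : Set (Set Ordinal)) : Prop :=
  ∃ a < κ.ord, {a} ∈ U

/-- `U` is normal: every regressive function on a member of `U` is constant
on some member of `U`. -/
def IsNormalFilterOn (U : Set (Set Ordinal)) : Prop :=
  ∀ A ∈ U, ∀ F : Ordinal → Ordinal, (∀ α ∈ A, F α < α) →
    ∃ A' ∈ U, A' ⊆ A ∧ ∃ c, ∀ α ∈ A', F α = c

/-- `t` is a finite strictly increasing sequence of elements of `A`. -/
def IsIncSeqFrom (A : Set Ordinal) (t : List Ordinal) : Prop :=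
  t.Chain' (· < ·) ∧ ∀ x ∈ t, x ∈ A

/-- `U` is Rowbottom: every `F : [A]^{<ω} → X` with `|X| < κ` is constant on each `[A']^n`
for some `A' ∈ U`, `A' ⊆ A`. -/
def IsRowbottomFilterOn (κ : Cardinal) (U : Set (Set Ordinal)) : Prop :=
  ∀ A ∈ U, ∀ (X : Type) (F : List Ordinal → X), Cardinal.mk X < κ →
    ∃ A' ∈ U, A' ⊆ A ∧ ∀ n : ℕ, ∀ s t : List Ordinal,
      IsIncSeqFrom A' s → s.length = n → IsIncSeqFrom A' t → t.length = n → F s = F t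

/-- `U` is Ramsey: every `F : [A]^2 → {0,1}` is constant on `[A']^2` for some
`A' ∈ U`, `A' ⊆ A`. -/
def IsRamseyFilterOn (U : Set (Set Ordinal)) : Prop :=
  ∀ A ∈ U, ∀ F : List Ordinal → Bool,
    ∃ A' ∈ U, A' ⊆ A ∧ ∀ s t : List Ordinal,
      IsIncSeqFrom A' s → s.length = 2 → IsIncSeqFrom A' t → t.length = 2 → F s = F t

/-- The Rudin–Keisler projection of `U` (a filter over `κ`) by `f : κ → κ`:
`f_*(U) = {Y ⊆ κ : f⁻¹[Y] ∈ U}`. -/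
def RKProj (κ : Cardinal) (f : Ordinal → Ordinal) (U : Set (Set Ordinal)) :
    Set (Set Ordinal) :=
  {Y | Y ⊆ Set.Iio κ.ord ∧ {x | x < κ.ord ∧ f x ∈ Y} ∈ U}

/-- `W ≤_RK U`: `W` is the Rudin–Keisler projection of `U` by some `f : κ → κ`. -/
def RKle (κ : Cardinal) (W U : Set (Set Ordinal)) : Prop :=
  ∃ f : Ordinal → Ordinal, (∀ x < κ.ord, f x < κ.ord) ∧ W = RKProj κ f U

/-- `U ≡_RK W`: `U ≤_RK W` and `W ≤_RK U`. -/
def RKequiv (κ : Cardinal) (U W : Set (Set Ordinal)) : Prop :=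
  RKle κ U W ∧ RKle κ W U

section RKAux
open Set

variable {κ : Cardinal} {U W : Set (Set Ordinal)}

lemma RKAux.memIio (hU : IsFilterOn κ U) {A : Set Ordinal} (hA : A ∈ U) :
    A ⊆ Set.Iio κ.ord := hU.1 A hA

lemma RKAux.nonempty_of_mem (hU : IsFilterOn κ U) {A : Set Ordinal} (hA : A ∈ U) :
    A.Nonempty := by
  rcases Set.eq_empty_or_nonempty A with rfl | h
  · exact absurd hA hU.2.1
  · exact h

lemma RKAux.upward (hU : IsFilterOn κ U) {A B : Set Ordinal} (hA : A ∈ U) (hAB : A ⊆ B)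
    (hB : B ⊆ Set.Iio κ.ord) : B ∈ U := hU.2.2.2.2 A hA B hAB hB

lemma RKAux.inter (hU : IsFilterOn κ U) {A B : Set Ordinal} (hA : A ∈ U) (hB : B ∈ U) :
    A ∩ B ∈ U := hU.2.2.2.1 A hA B hB

/-- a κ-complete ultrafilter decides every partition into < κ pieces. -/
lemma RKAux.partition (hU : IsUltrafilterOn κ U) (hc : IsCompleteFilterOn κ κ U)
    {X : Type} (hX : Cardinal.mk X < κ) (G : Ordinal → X) {A : Set Ordinal} (hA : A ∈ U) :
    ∃ c, {α | α ∈ A ∧ G α = c} ∈ U := by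
  by_contra hno
  push_neg at hno
  have hsub : ∀ c, {α | α ∈ A ∧ G α = c} ⊆ Set.Iio κ.ord := by
    intro c α hα; exact RKAux.memIio hU.1 hA hα.1
  have hcomp : ∀ c, Set.Iio κ.ord \ {α | α ∈ A ∧ G α = c} ∈ U := by
    intro c
    rcases hU.2 _ (hsub c) with h | h
    · exact absurd h (hno c)
    · exact h
  have hbig : (Set.Iio κ.ord ∩ ⋂ c, (Set.Iio κ.ord \ {α | α ∈ A ∧ G α = c})) ∈ U :=
    hc X _ hX hcomp
  have hempty : (Set.Iio κ.ord ∩ ⋂ c, (Set.Iio κ.ord \ {α | α ∈ A ∧ G α = c})) ∩ A = ∅ := by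
    ext α
    simp only [Set.mem_inter_iff, Set.mem_iInter, Set.mem_diff, Set.mem_empty_iff_false,
      iff_false, not_and]
    intro h hA'
    rcases h.2 (G α) with ⟨-, hn⟩
    exact hn ⟨hA', rfl⟩
  have : (∅ : Set Ordinal) ∈ U := hempty ▸ RKAux.inter hU.1 hbig hA
  exact hU.1.2.1 this

/-- an ultrafilter containing a set is decided on subsets of Iio. -/
lemma RKAux.mem_or_compl (hU : IsUltrafilterOn κ U) {A : Set Ordinal}
    (hA : A ⊆ Set.Iio κ.ord) : A ∈ U ∨ (Set.Iio κ.ord \ A) ∈ U := hU.2 A hA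

/-- normal ultrafilters are closed under diagonal intersections. -/
lemma RKAux.diag (hU : IsUltrafilterOn κ U) (hn : IsNormalFilterOn U)
    (B : Ordinal → Set Ordinal) (hB : ∀ β, B β ∈ U) :
    {α | α < κ.ord ∧ ∀ β < α, α ∈ B β} ∈ U := by
  set Δ := {α | α < κ.ord ∧ ∀ β < α, α ∈ B β} with hΔ
  have hΔsub : Δ ⊆ Set.Iio κ.ord := fun α hα => hα.1
  rcases hU.2 Δ hΔsub with h | h
  · exact h
  · exfalso
    set D := Set.Iio κ.ord \ Δ with hD
    have hDne : ∀ α ∈ D, {β | β < α ∧ α ∉ B β}.Nonempty := by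
      intro α hα
      rcases hα with ⟨hlt, hnΔ⟩
      by_contra hne
      rw [Set.not_nonempty_iff_eq_empty] at hne
      apply hnΔ
      refine ⟨hlt, fun β hβ => ?_⟩
      by_contra hnb
      have hmem : β ∈ {β | β < α ∧ α ∉ B β} := ⟨hβ, hnb⟩
      rw [hne] at hmem
      exact hmem
    set F : Ordinal → Ordinal := fun α => sInf {β | β < α ∧ α ∉ B β} with hF
    have hFreg : ∀ α ∈ D, F α < α := by
      intro α hα; exact (csInf_mem (hDne α hα)).1
    rcases hn D h F hFreg with ⟨D', hD', hD'sub, c, hc⟩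
    have hmem : D' ∩ B c ∈ U := RKAux.inter hU.1 hD' (hB c)
    rcases RKAux.nonempty_of_mem hU.1 hmem with ⟨α, hα, hαB⟩
    have : α ∉ B c := by
      have h2 := csInf_mem (hDne α (hD'sub hα))
      have h3 : F α = c := hc α hα
      rw [show sInf {β | β < α ∧ α ∉ B β} = F α from rfl, h3] at h2
      exact h2.2
    exact this hαB
end RKAux
section RKProjLemmas
open Set
variable {κ : Cardinal} {U W : Set (Set Ordinal)} {f : Ordinal → Ordinal}

lemma RKAux.mem_rkproj {Y : Set Ordinal} :
    Y ∈ RKProj κ f U ↔ Y ⊆ Set.Iio κ.ord ∧ {x | x < κ.ord ∧ f x ∈ Y} ∈ U := Iff.rfl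

lemma RKAux.rkproj_ultra (hU : IsUltrafilterOn κ U) (hf : ∀ x < κ.ord, f x < κ.ord) :
    IsUltrafilterOn κ (RKProj κ f U) := by
  have hpre : ∀ Y : Set Ordinal, {x | x < κ.ord ∧ f x ∈ Y} ⊆ Set.Iio κ.ord :=
    fun Y x hx => hx.1
  constructor
  · refine ⟨fun Y hY => hY.1, ?_, ?_, ?_, ?_⟩
    · rintro ⟨-, h⟩
      have : {x | x < κ.ord ∧ f x ∈ (∅ : Set Ordinal)} = ∅ := by
        ext x; simp
      rw [this] at h
      exact hU.1.2.1 h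
    · refine ⟨Set.Subset.rfl, ?_⟩
      have : {x | x < κ.ord ∧ f x ∈ Set.Iio κ.ord} = Set.Iio κ.ord := by
        ext x; exact ⟨fun h => h.1, fun h => ⟨h, hf x h⟩⟩
      rw [this]; exact hU.1.2.2.1
    · rintro Y ⟨hY1, hY2⟩ Z ⟨hZ1, hZ2⟩
      refine ⟨fun x hx => hY1 hx.1, ?_⟩
      have : {x | x < κ.ord ∧ f x ∈ Y ∩ Z} =
          {x | x < κ.ord ∧ f x ∈ Y} ∩ {x | x < κ.ord ∧ f x ∈ Z} := by
        ext x; simp only [Set.mem_setOf_eq, Set.mem_inter_iff]; tauto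
      rw [this]; exact RKAux.inter hU.1 hY2 hZ2
    · rintro Y ⟨hY1, hY2⟩ Z hYZ hZ
      refine ⟨hZ, ?_⟩
      exact RKAux.upward hU.1 hY2 (fun x hx => ⟨hx.1, hYZ hx.2⟩) (hpre Z)
  · intro Y hY
    rcases hU.2 _ (hpre Y) with h | h
    · exact Or.inl ⟨hY, h⟩
    · refine Or.inr ⟨Set.diff_subset, ?_⟩
      have : {x | x < κ.ord ∧ f x ∈ Set.Iio κ.ord \ Y} =
          Set.Iio κ.ord \ {x | x < κ.ord ∧ f x ∈ Y} := by
        ext x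
        simp only [Set.mem_setOf_eq, Set.mem_diff, Set.mem_Iio]
        constructor
        · rintro ⟨h1, h2, h3⟩; exact ⟨h1, fun hc => h3 hc.2⟩
        · rintro ⟨h1, h2⟩; exact ⟨h1, hf x h1, fun hc => h2 ⟨h1, hc⟩⟩
      rw [this]; exact h

lemma RKAux.rkproj_complete (hU : IsFilterOn κ U) (hc : IsCompleteFilterOn κ κ U)
    (hf : ∀ x < κ.ord, f x < κ.ord) : IsCompleteFilterOn κ κ (RKProj κ f U) := by
  intro ι s hι hs
  have h1 : ∀ i, {x | x < κ.ord ∧ f x ∈ s i} ∈ U := fun i => (hs i).2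
  have h2 := hc ι _ hι h1
  refine ⟨Set.inter_subset_left, ?_⟩
  refine RKAux.upward hU h2 ?_ (fun x hx => hx.1)
  rintro x ⟨hx, hmem⟩
  refine ⟨hx, Set.mem_inter (hf x hx) ?_⟩
  rw [Set.mem_iInter]
  intro i
  exact (Set.mem_iInter.mp hmem i).2

lemma RKAux.rkproj_trivial (hW : IsFilterOn κ W) (hf : ∀ x < κ.ord, f x < κ.ord)
    (h : IsTrivialFilterOn κ W) : IsTrivialFilterOn κ (RKProj κ f W) := by
  rcases h with ⟨c, hc, hmem⟩
  refine ⟨f c, hf c hc, ?_, ?_⟩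
  · intro x hx
    rcases hx with rfl
    exact hf c hc
  · refine RKAux.upward hW hmem ?_ (fun x hx => hx.1)
    rintro x rfl
    exact ⟨hc, rfl⟩
end RKProjLemmas
section RowbottomThm
open Set
variable {κ : Cardinal} {W : Set (Set Ordinal)}

lemma RKAux.normal_rowb_n (hW : IsUltrafilterOn κ W)
    (hc : IsCompleteFilterOn κ κ W) (hn : IsNormalFilterOn W)
    {X : Type} (hX : Cardinal.mk X < κ) :
    ∀ (n : ℕ) (F : List Ordinal → X) (A : Set Ordinal), A ∈ W →
      ∃ B ∈ W, B ⊆ A ∧ ∃ c, ∀ s, IsIncSeqFrom B s → s.length = n → F s = c := by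
  intro n
  induction n with
  | zero =>
    intro F A hA
    refine ⟨A, hA, Set.Subset.rfl, F [], fun s _ hs => ?_⟩
    cases s with
    | nil => rfl
    | cons a t => simp at hs
  | succ n ih =>
    intro F A hA
    have hex : ∀ α : Ordinal, ∃ B, B ∈ W ∧ B ⊆ A ∧
        ∃ c, ∀ s, IsIncSeqFrom B s → s.length = n → F (α :: s) = c := by
      intro α
      rcases ih (fun s => F (α :: s)) A hA with ⟨B, hB, hsub, c, hc'⟩
      exact ⟨B, hB, hsub, c, hc'⟩
    choose B hBmem hBsub cc hcc using hex
    obtain ⟨c, hC⟩ := RKAux.partition hW hc hX cc hA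
    have hdiag := RKAux.diag hW hn B hBmem
    refine ⟨{α | α ∈ A ∧ cc α = c} ∩ {α | α < κ.ord ∧ ∀ β < α, α ∈ B β},
      RKAux.inter hW.1 hC hdiag, fun x hx => hx.1.1, c, ?_⟩
    intro s hs hlen
    cases s with
    | nil => simp at hlen
    | cons α t =>
      have hlen' : t.length = n := by simpa using hlen
      have hα := hs.2 α (by simp)
      have hpair : (α :: t).Pairwise (· < ·) := List.isChain_iff_pairwise.mp hs.1
      have hgt : ∀ x ∈ t, α < x := (List.pairwise_cons.mp hpair).1
      have ht : IsIncSeqFrom (B α) t := by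
        constructor
        · exact List.isChain_iff_pairwise.mpr (List.pairwise_cons.mp hpair).2
        · intro x hx
          have hxm := hs.2 x (List.mem_cons_of_mem _ hx)
          exact hxm.2.2 α (hgt x hx)
      have heq := hcc α t ht hlen'
      rw [heq]
      exact hα.1.2

lemma RKAux.normal_rowbottom (hunc : Cardinal.aleph0 < κ) (hW : IsUltrafilterOn κ W)
    (hc : IsCompleteFilterOn κ κ W) (hn : IsNormalFilterOn W) :
    IsRowbottomFilterOn κ W := by
  intro A hA X F hX
  have h := RKAux.normal_rowb_n hW hc hn hX
  choose Bn hBn hBsub cn hcn using fun n : ℕ => h n F A hA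
  have hcount : Cardinal.mk ℕ < κ := by rw [Cardinal.mk_nat]; exact hunc
  have hbig := hc ℕ Bn hcount hBn
  refine ⟨Set.Iio κ.ord ∩ ⋂ n, Bn n, hbig, ?_, ?_⟩
  · intro x hx
    exact hBsub 0 (Set.mem_iInter.mp hx.2 0)
  · intro n s t hs hsl ht htl
    have hsub : (Set.Iio κ.ord ∩ ⋂ n, Bn n) ⊆ Bn n := fun x hx => Set.mem_iInter.mp hx.2 n
    have hs' : IsIncSeqFrom (Bn n) s := ⟨hs.1, fun x hx => hsub (hs.2 x hx)⟩
    have ht' : IsIncSeqFrom (Bn n) t := ⟨ht.1, fun x hx => hsub (ht.2 x hx)⟩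
    rw [hcn n s hs' hsl, hcn n t ht' htl]
end RowbottomThm
section FixedPoint
open Set Classical
variable {κ : Cardinal} {W : Set (Set Ordinal)}

lemma RKAux.fixed (hW : IsUltrafilterOn κ W) (hn : IsNormalFilterOn W)
    (hnt : ¬ IsTrivialFilterOn κ W) {h : Ordinal → Ordinal}
    (hb : ∀ x < κ.ord, h x < κ.ord)
    (key : ∀ Y ⊆ Set.Iio κ.ord, (Y ∈ W ↔ {z | z < κ.ord ∧ h z ∈ Y} ∈ W)) :
    {z | z < κ.ord ∧ h z = z} ∈ W := by
  set E := {z | z < κ.ord ∧ h z = z} with hE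
  have hEsub : E ⊆ Set.Iio κ.ord := fun z hz => hz.1
  rcases hW.2 E hEsub with hgood | hbad
  · exact hgood
  exfalso
  set L := {z | z < κ.ord ∧ h z < z} with hL
  have hLsub : L ⊆ Set.Iio κ.ord := fun z hz => hz.1
  rcases hW.2 L hLsub with hLm | hLc
  · -- regressive case
    obtain ⟨L', hL', hL'sub, c, hcL⟩ := hn L hLm h (fun α hα => hα.2)
    obtain ⟨α, hα⟩ := RKAux.nonempty_of_mem hW.1 hL'
    have hcκ : c < κ.ord := by
      have h1 : h α < α := (hL'sub hα).2
      have h2 : α < κ.ord := (hL'sub hα).1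
      calc c = h α := (hcL α hα).symm
        _ < α := h1
        _ < κ.ord := h2
    have hsing : ({c} : Set Ordinal) ∈ W := by
      rw [key {c} (by intro x hx; rcases hx with rfl; exact hcκ)]
      refine RKAux.upward hW.1 hL' ?_ (fun z hz => hz.1)
      intro z hz
      exact ⟨(hL'sub hz).1, hcL z hz⟩
    exact hnt ⟨c, hcκ, hsing⟩
  · -- increasing case
    set G := {z | z < κ.ord ∧ z < h z} with hG
    have hGm : G ∈ W := by
      refine RKAux.upward hW.1 (RKAux.inter hW.1 hbad hLc) ?_ (fun z hz => hz.1)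
      rintro z ⟨⟨hz1, hz2⟩, -, hz3⟩
      refine ⟨hz1, ?_⟩
      rcases lt_trichotomy z (h z) with hlt | heq | hgt
      · exact hlt
      · exact absurd ⟨hz1, heq.symm⟩ hz2
      · exact absurd ⟨hz1, hgt⟩ hz3
    set M := {y | y < κ.ord ∧ ∃ z, z < κ.ord ∧ z < y ∧ h z = y} with hM
    have hMm : M ∈ W := by
      rw [key M (fun y hy => hy.1)]
      refine RKAux.upward hW.1 hGm ?_ (fun z hz => hz.1)
      rintro z ⟨hz1, hz2⟩
      exact ⟨hz1, hb z hz1, z, hz1, hz2, rfl⟩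
    set r : Ordinal → Ordinal := fun y =>
      if hy : ∃ z, z < κ.ord ∧ z < y ∧ h z = y then hy.choose else 0 with hr
    have hrs : ∀ y ∈ M, r y < κ.ord ∧ r y < y ∧ h (r y) = y := by
      intro y hy
      rcases hy with ⟨hy1, hy2⟩
      simp only [hr, dif_pos hy2]
      exact hy2.choose_spec
    obtain ⟨M', hM', hM'sub, z₀, hz₀⟩ := hn M hMm r (fun y hy => (hrs y hy).2.1)
    obtain ⟨y, hy⟩ := RKAux.nonempty_of_mem hW.1 hM'
    have hhz₀ : h z₀ = y := by
      have := (hrs y (hM'sub hy)).2.2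
      rwa [hz₀ y hy] at this
    have hz₀κ : z₀ < κ.ord := by
      have := (hrs y (hM'sub hy)).1
      rwa [hz₀ y hy] at this
    have hsub' : M' ⊆ {h z₀} := by
      intro y' hy'
      have := (hrs y' (hM'sub hy')).2.2
      rw [hz₀ y' hy'] at this
      exact this.symm
    have : ({h z₀} : Set Ordinal) ∈ W :=
      RKAux.upward hW.1 hM' hsub'
        (by rintro x rfl; exact hb z₀ hz₀κ)
    exact hnt ⟨h z₀, hb z₀ hz₀κ, this⟩
end FixedPoint
section Impl12
open Set Classical
variable {κ : Cardinal} {U : Set (Set Ordinal)}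

lemma RKAux.ord_pos (hunc : Cardinal.aleph0 < κ) : (0 : Ordinal) < κ.ord := by
  rw [Cardinal.lt_ord]
  simpa using (Cardinal.aleph0_pos.trans hunc)

lemma RKAux.one_to_two (hunc : Cardinal.aleph0 < κ) (hU : IsUltrafilterOn κ U)
    (hc : IsCompleteFilterOn κ κ U) (hnt : ¬ IsTrivialFilterOn κ U)
    (h1 : ∀ W : Set (Set Ordinal), IsUltrafilterOn κ W → IsCompleteFilterOn κ κ W →
      ¬ IsTrivialFilterOn κ W → RKle κ W U → RKequiv κ U W) :
    ∃ W : Set (Set Ordinal), IsUltrafilterOn κ W ∧ IsNormalFilterOn W ∧ RKequiv κ U W := by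
  classical
  set S : Set (Ordinal → Ordinal) :=
    {f | (∀ x < κ.ord, f x < κ.ord) ∧ ¬∃ c, {x | x < κ.ord ∧ f x = c} ∈ U} with hS
  -- the identity is non-constant mod U
  have hid : id ∈ S := by
    refine ⟨fun x hx => hx, ?_⟩
    rintro ⟨c, hcU⟩
    obtain ⟨y, hy1, hy2⟩ := RKAux.nonempty_of_mem hU.1 hcU
    subst hy2
    refine hnt ⟨y, hy1, ?_⟩
    refine RKAux.upward hU.1 hcU (fun z hz => hz.2) ?_
    rintro z rfl; exact hy1
  -- there is a ≺-minimal element of S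
  have hmin : ∃ f ∈ S, ¬∃ g ∈ S, {x | x < κ.ord ∧ g x < f x} ∈ U := by
    by_contra hno
    push_neg at hno
    have hstep : ∀ f ∈ S, ∃ g, g ∈ S ∧ {x | x < κ.ord ∧ g x < f x} ∈ U := by
      intro f hf
      rcases hno f hf with ⟨g, hg, hgU⟩
      exact ⟨g, hg, hgU⟩
    let step : {f // f ∈ S} → {f // f ∈ S} := fun p =>
      ⟨(hstep p.1 p.2).choose, (hstep p.1 p.2).choose_spec.1⟩
    let seq : ℕ → {f // f ∈ S} := fun n => step^[n] ⟨id, hid⟩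
    have hseq : ∀ n, seq (n + 1) = step (seq n) := by
      intro n
      simp only [seq, Function.iterate_succ_apply']
    have hdec : ∀ n, {x | x < κ.ord ∧ (seq (n+1)).1 x < (seq n).1 x} ∈ U := by
      intro n
      rw [hseq n]
      exact (hstep (seq n).1 (seq n).2).choose_spec.2
    have hbig := hc ℕ (fun n => {x | x < κ.ord ∧ (seq (n+1)).1 x < (seq n).1 x})
      (by rw [Cardinal.mk_nat]; exact hunc) hdec
    obtain ⟨α, hα1, hα2⟩ := RKAux.nonempty_of_mem hU.1 hbig
    have hd : ∀ n : ℕ, (seq (n+1)).1 α < (seq n).1 α := by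
      intro n
      exact (Set.mem_iInter.mp hα2 n).2
    -- infinite descent in the ordinals
    have hwf : WellFounded ((· < ·) : Ordinal → Ordinal → Prop) := wellFounded_lt
    set g : ℕ → Ordinal := fun n => (seq n).1 α with hg
    have hne : (Set.range g).Nonempty := ⟨g 0, ⟨0, rfl⟩⟩
    obtain ⟨n, hn⟩ := hwf.min_mem (Set.range g) hne
    exact hwf.not_lt_min (Set.range g) ⟨n+1, rfl⟩ (hn ▸ hd n)
  obtain ⟨f₀, hf₀S, hf₀min⟩ := hmin
  have hb : ∀ x < κ.ord, f₀ x < κ.ord := hf₀S.1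
  set W := RKProj κ f₀ U with hW
  have hWu : IsUltrafilterOn κ W := RKAux.rkproj_ultra hU hb
  have hWc : IsCompleteFilterOn κ κ W := RKAux.rkproj_complete hU.1 hc hb
  have hWnt : ¬ IsTrivialFilterOn κ W := by
    rintro ⟨a, ha, hsing⟩
    apply hf₀S.2
    refine ⟨a, ?_⟩
    have := hsing.2
    have heq : {x | x < κ.ord ∧ f₀ x ∈ ({a} : Set Ordinal)} =
        {x | x < κ.ord ∧ f₀ x = a} := by
      ext x; simp
    rwa [heq] at this
  have hWn : IsNormalFilterOn W := by
    intro A hA F hF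
    have hP : {x | x < κ.ord ∧ f₀ x ∈ A} ∈ U := hA.2
    set G : Ordinal → Ordinal :=
      fun x => if x < κ.ord ∧ f₀ x ∈ A then F (f₀ x) else 0 with hG
    have hGb : ∀ x < κ.ord, G x < κ.ord := by
      intro x hx
      by_cases hxP : x < κ.ord ∧ f₀ x ∈ A
      · simp only [hG, if_pos hxP]
        exact lt_trans (hF (f₀ x) hxP.2) (hA.1 hxP.2)
      · simp only [hG, if_neg hxP]
        exact RKAux.ord_pos hunc
    have hGlt : {x | x < κ.ord ∧ G x < f₀ x} ∈ U := by
      refine RKAux.upward hU.1 hP ?_ (fun x hx => hx.1)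
      rintro x ⟨hx1, hx2⟩
      refine ⟨hx1, ?_⟩
      simp only [hG, if_pos (⟨hx1, hx2⟩ : x < κ.ord ∧ f₀ x ∈ A)]
      exact hF (f₀ x) hx2
    have hGnotS : G ∉ S := fun hGS => hf₀min ⟨G, hGS, hGlt⟩
    have hGconst : ∃ c, {x | x < κ.ord ∧ G x = c} ∈ U := by
      by_contra hcon
      exact hGnotS ⟨hGb, hcon⟩
    obtain ⟨c, hcU⟩ := hGconst
    refine ⟨{β | β ∈ A ∧ F β = c}, ?_, fun β hβ => hβ.1, c, fun β hβ => hβ.2⟩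
    refine ⟨fun β hβ => hA.1 hβ.1, ?_⟩
    refine RKAux.upward hU.1 (RKAux.inter hU.1 hP hcU) ?_ (fun x hx => hx.1)
    rintro x ⟨⟨hx1, hx2⟩, -, hx3⟩
    refine ⟨hx1, hx2, ?_⟩
    rw [← hx3]
    simp only [hG, if_pos (⟨hx1, hx2⟩ : x < κ.ord ∧ f₀ x ∈ A)]
  have hWle : RKle κ W U := ⟨f₀, hb, rfl⟩
  exact ⟨W, hWu, hWn, h1 W hWu hWc hWnt hWle⟩
end Impl12
section Impl23
open Set
variable {κ : Cardinal} {U : Set (Set Ordinal)}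

lemma RKAux.sorted_of_inc {l : List Ordinal} (h : l.Chain' (· < ·)) :
    List.Pairwise (· ≤ ·) l :=
  (List.isChain_iff_pairwise.mp h).imp le_of_lt

lemma RKAux.inc_of_sorted_nodup {l : List Ordinal} (h : l.Nodup)
    (h2 : List.Pairwise (· ≤ ·) l) : l.Chain' (· < ·) := by
  unfold List.Chain'
  rw [List.isChain_iff_pairwise]
  rw [List.Nodup] at h
  refine (h.and h2).imp ?_
  rintro a b ⟨hne, hle⟩
  exact lt_of_le_of_ne hle hne

lemma RKAux.two_to_three (hunc : Cardinal.aleph0 < κ) (hU : IsUltrafilterOn κ U)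
    (hc : IsCompleteFilterOn κ κ U) (hnt : ¬ IsTrivialFilterOn κ U)
    (h2 : ∃ W : Set (Set Ordinal), IsUltrafilterOn κ W ∧ IsNormalFilterOn W ∧ RKequiv κ U W) :
    IsRowbottomFilterOn κ U := by
  classical
  obtain ⟨W, hWu, hWn, ⟨f, hf, hUW⟩, ⟨g, hg, hWU⟩⟩ := h2
  -- W is κ-complete
  have hWc : IsCompleteFilterOn κ κ W := by
    rw [hWU]; exact RKAux.rkproj_complete hU.1 hc hg
  -- W is non-trivial
  have hWnt : ¬ IsTrivialFilterOn κ W := by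
    intro htr
    exact hnt (hUW ▸ RKAux.rkproj_trivial hWu.1 hf htr)
  -- g ∘ f projects W to itself, hence is the identity mod W
  have hgfb : ∀ z < κ.ord, g (f z) < κ.ord := fun z hz => hg _ (hf z hz)
  have key : ∀ Y ⊆ Set.Iio κ.ord, (Y ∈ W ↔ {z | z < κ.ord ∧ g (f z) ∈ Y} ∈ W) := by
    intro Y hY
    constructor
    · intro hYW
      have h1 : {x | x < κ.ord ∧ g x ∈ Y} ∈ U := by
        rw [hWU] at hYW; exact hYW.2
      have h2 : {x | x < κ.ord ∧ g x ∈ Y} ∈ RKProj κ f W := hUW ▸ h1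
      have h3 := h2.2
      refine RKAux.upward hWu.1 h3 ?_ (fun z hz => hz.1)
      rintro z ⟨hz1, -, hz2⟩
      exact ⟨hz1, hz2⟩
    · intro hZW
      rw [hWU]
      refine ⟨hY, ?_⟩
      rw [hUW]
      refine ⟨fun x hx => hx.1, ?_⟩
      refine RKAux.upward hWu.1 hZW ?_ (fun z hz => hz.1)
      rintro z ⟨hz1, hz2⟩
      exact ⟨hz1, hf z hz1, hz2⟩
  have hT : {z | z < κ.ord ∧ g (f z) = z} ∈ W := RKAux.fixed hWu hWn hWnt hgfb key
  have hWrow : IsRowbottomFilterOn κ W := RKAux.normal_rowbottom hunc hWu hWc hWn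
  -- now prove U is Rowbottom
  intro A hA X F hX
  have hB₀ : {x | x < κ.ord ∧ f x ∈ A} ∈ W := by
    rw [hUW] at hA; exact hA.2
  set G : List Ordinal → X := fun t => F ((t.map f).insertionSort (· ≤ ·)) with hG
  obtain ⟨B', hB', hB'sub, hhom⟩ :=
    hWrow _ (RKAux.inter hWu.1 hT hB₀) X G hX
  have hB'T : ∀ x ∈ B', g (f x) = x := fun x hx => (hB'sub hx).1.2
  have hB'κ : ∀ x ∈ B', x < κ.ord := fun x hx => (hB'sub hx).1.1
  have hB'A : ∀ x ∈ B', f x ∈ A := fun x hx => (hB'sub hx).2.2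
  set A' := (f '' B') ∩ Set.Iio κ.ord with hA'
  have hA'U : A' ∈ U := by
    rw [hUW]
    refine ⟨Set.inter_subset_right, ?_⟩
    refine RKAux.upward hWu.1 hB' ?_ (fun z hz => hz.1)
    intro x hx
    exact ⟨hB'κ x hx, ⟨⟨x, hx, rfl⟩, hf x (hB'κ x hx)⟩⟩
  have hA'A : A' ⊆ A := by
    rintro y ⟨⟨x, hx, rfl⟩, -⟩
    exact hB'A x hx
  -- the key transfer claim
  have hgood : ∀ y ∈ A', g y ∈ B' ∧ f (g y) = y := by
    rintro y ⟨⟨x, hx, rfl⟩, -⟩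
    rw [hB'T x hx]
    exact ⟨hx, rfl⟩
  have claim : ∀ s : List Ordinal, IsIncSeqFrom A' s →
      IsIncSeqFrom B' ((s.map g).insertionSort (· ≤ ·)) ∧
      ((s.map g).insertionSort (· ≤ ·)).length = s.length ∧
      F s = G ((s.map g).insertionSort (· ≤ ·)) := by
    intro s hs
    have hperm : List.Perm ((s.map g).insertionSort (· ≤ ·)) (s.map g) :=
      List.perm_insertionSort _ _
    have hsnodup : s.Nodup := (List.isChain_iff_pairwise.mp hs.1).nodup
    have hmapnodup : (s.map g).Nodup := by
      refine List.Nodup.map_on ?_ hsnodup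
      intro x hx y hy hxy
      have h1 := (hgood x (hs.2 x hx)).2
      have h2 := (hgood y (hs.2 y hy)).2
      rw [← h1, ← h2, hxy]
    have hnodup : ((s.map g).insertionSort (· ≤ ·)).Nodup := hperm.nodup_iff.mpr hmapnodup
    have hsorted : List.Pairwise (· ≤ ·) ((s.map g).insertionSort (· ≤ ·)) :=
      List.pairwise_insertionSort _ _
    have hchain : ((s.map g).insertionSort (· ≤ ·)).Chain' (· < ·) :=
      RKAux.inc_of_sorted_nodup hnodup hsorted
    have hmem : ∀ x ∈ (s.map g).insertionSort (· ≤ ·), x ∈ B' := by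
      intro x hx
      have hx' := hperm.mem_iff.mp hx
      rcases List.mem_map.mp hx' with ⟨y, hy, rfl⟩
      exact (hgood y (hs.2 y hy)).1
    refine ⟨⟨hchain, hmem⟩, by rw [hperm.length_eq, List.length_map], ?_⟩
    -- F s = G (sorted map g s)
    have hmapmap : (((s.map g).insertionSort (· ≤ ·)).map f).Perm s := by
      have h1 : (((s.map g).insertionSort (· ≤ ·)).map f).Perm ((s.map g).map f) :=
        hperm.map f
      have h2 : (s.map g).map f = s := by
        rw [List.map_map]
        have : ∀ a ∈ s, (f ∘ g) a = a := fun a ha => (hgood a (hs.2 a ha)).2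
        rw [List.map_congr_left (g := id) this, List.map_id]
      rwa [h2] at h1
    have hsort_eq : ((((s.map g).insertionSort (· ≤ ·)).map f).insertionSort (· ≤ ·)) = s := by
      refine List.Perm.eq_of_pairwise' (List.pairwise_insertionSort _ _)
        (RKAux.sorted_of_inc hs.1) ?_
      exact (List.perm_insertionSort _ _).trans hmapmap
    simp only [hG]
    rw [hsort_eq]
  refine ⟨A', hA'U, hA'A, ?_⟩
  intro n s t hs hsl ht htl
  obtain ⟨hs1, hs2, hs3⟩ := claim s hs
  obtain ⟨ht1, ht2, ht3⟩ := claim t ht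
  rw [hs3, ht3]
  exact hhom n _ _ hs1 (by rw [hs2, hsl]) ht1 (by rw [ht2, htl])
end Impl23
section Impl41
open Set
variable {κ : Cardinal} {U : Set (Set Ordinal)}

lemma RKAux.three_to_four (hunc : Cardinal.aleph0 < κ) (h3 : IsRowbottomFilterOn κ U) :
    IsRamseyFilterOn U := by
  intro A hA F
  have hbool : Cardinal.mk Bool < κ :=
    lt_trans (Cardinal.lt_aleph0_of_finite Bool) hunc
  obtain ⟨A', hA', hsub, hhom⟩ := h3 A hA Bool F hbool
  exact ⟨A', hA', hsub, fun s t hs hsl ht htl => hhom 2 s t hs hsl ht htl⟩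

lemma RKAux.pair_inc {A : Set Ordinal} {x y : Ordinal} (hx : x ∈ A) (hy : y ∈ A)
    (hxy : x < y) : IsIncSeqFrom A [x, y] := by
  constructor
  · simp [List.Chain', List.isChain_cons_cons, hxy]
  · intro z hz
    simp only [List.mem_cons, List.not_mem_nil, or_false] at hz
    rcases hz with rfl | rfl
    · exact hx
    · exact hy

lemma RKAux.four_to_one (hunc : Cardinal.aleph0 < κ) (hU : IsUltrafilterOn κ U)
    (hc : IsCompleteFilterOn κ κ U) (hnt : ¬ IsTrivialFilterOn κ U)
    (h4 : IsRamseyFilterOn U) :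
    ∀ W : Set (Set Ordinal), IsUltrafilterOn κ W → IsCompleteFilterOn κ κ W →
      ¬ IsTrivialFilterOn κ W → RKle κ W U → RKequiv κ U W := by
  classical
  rintro W hWu hWc hWnt ⟨f, hf, hWU⟩
  refine ⟨?_, ⟨f, hf, hWU⟩⟩
  set F : List Ordinal → Bool := fun l => match l with
    | [a, b] => decide (f a = f b)
    | _ => false
    with hF
  obtain ⟨A', hA', hsub, hhom⟩ := h4 (Set.Iio κ.ord) hU.1.2.2.1 F
  by_cases hcase : ∃ a ∈ A', ∃ b ∈ A', a < b ∧ f a = f b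
  · exfalso
    obtain ⟨a, ha, b, hb, hab, hfab⟩ := hcase
    have hFab : F [a, b] = true := by simp [hF, hfab]
    have hpairs : ∀ x ∈ A', ∀ y ∈ A', x < y → f x = f y := by
      intro x hx y hy hxy
      have h1 := hhom [x, y] [a, b] (RKAux.pair_inc hx hy hxy) rfl
        (RKAux.pair_inc ha hb hab) rfl
      rw [hFab] at h1
      have : decide (f x = f y) = true := h1
      exact of_decide_eq_true this
    obtain ⟨a₀, ha₀⟩ := RKAux.nonempty_of_mem hU.1 hA'
    have hconst : ∀ x ∈ A', f x = f a₀ := by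
      intro x hx
      rcases lt_trichotomy x a₀ with h | h | h
      · exact hpairs x hx a₀ ha₀ h
      · rw [h]
      · exact (hpairs a₀ ha₀ x hx h).symm
    have hsing : ({f a₀} : Set Ordinal) ∈ W := by
      rw [hWU]
      refine ⟨by rintro y rfl; exact hf a₀ (hsub ha₀), ?_⟩
      refine RKAux.upward hU.1 hA' ?_ (fun x hx => hx.1)
      intro x hx
      exact ⟨hsub hx, hconst x hx⟩
    exact hWnt ⟨f a₀, hf a₀ (hsub ha₀), hsing⟩
  · push_neg at hcase
    have hinj : ∀ x ∈ A', ∀ y ∈ A', f x = f y → x = y := by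
      intro x hx y hy hxy
      rcases lt_trichotomy x y with h | h | h
      · exact absurd hxy (hcase x hx y hy h)
      · exact h
      · exact absurd hxy.symm (hcase y hy x hx h)
    set g : Ordinal → Ordinal := fun y =>
      if hy : ∃ x ∈ A', f x = y then hy.choose else 0 with hg
    have hgspec : ∀ y, (hy : ∃ x ∈ A', f x = y) → g y ∈ A' ∧ f (g y) = y := by
      intro y hy
      simp only [hg, dif_pos hy]
      exact ⟨hy.choose_spec.1, hy.choose_spec.2⟩
    have hginv : ∀ x ∈ A', g (f x) = x := by
      intro x hx
      have h := hgspec (f x) ⟨x, hx, rfl⟩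
      exact hinj _ h.1 x hx h.2
    have hgb : ∀ y < κ.ord, g y < κ.ord := by
      intro y hy
      by_cases hey : ∃ x ∈ A', f x = y
      · exact hsub (hgspec y hey).1
      · simp only [hg, dif_neg hey]
        exact RKAux.ord_pos hunc
    refine ⟨g, hgb, ?_⟩
    ext Y
    constructor
    · intro hY
      refine ⟨RKAux.memIio hU.1 hY, ?_⟩
      rw [hWU]
      refine ⟨fun y hy => hy.1, ?_⟩
      refine RKAux.upward hU.1 (RKAux.inter hU.1 hA' hY) ?_ (fun x hx => hx.1)
      rintro x ⟨hx1, hx2⟩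
      refine ⟨hsub hx1, hf x (hsub hx1), ?_⟩
      rw [hginv x hx1]
      exact hx2
    · rintro ⟨hYsub, hYW⟩
      rw [hWU] at hYW
      have hpre := hYW.2
      refine RKAux.upward hU.1 (RKAux.inter hU.1 hA' hpre) ?_ hYsub
      rintro x ⟨hx1, -, -, hx4⟩
      rwa [hginv x hx1] at hx4
end Impl41

/-- For a measurable cardinal `κ` and a non-trivial `κ`-complete ultrafilter `U` over `κ`,
the following are equivalent: (1) `U` is `≤_RK`-minimal among non-trivial `κ`-complete
ultrafilters over `κ`; (2) `U ≡_RK W` for some normal ultrafilter `W` over `κ`;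
(3) `U` is Rowbottom; (4) `U` is Ramsey. -/
theorem rkMinimal_tfae_normal_rowbottom_ramsey
    (κ : Cardinal) (U : Set (Set Ordinal)) (hunc : Cardinal.aleph0 < κ)
    (hU : IsUltrafilterOn κ U) (hc : IsCompleteFilterOn κ κ U)
    (hnt : ¬ IsTrivialFilterOn κ U) :
    List.TFAE [
      ∀ W : Set (Set Ordinal), IsUltrafilterOn κ W → IsCompleteFilterOn κ κ W →
        ¬ IsTrivialFilterOn κ W → RKle κ W U → RKequiv κ U W,
      ∃ W : Set (Set Ordinal), IsUltrafilterOn κ W ∧ IsNormalFilterOn W ∧ RKequiv κ U W,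
      IsRowbottomFilterOn κ U,
      IsRamseyFilterOn U] := by
  tfae_have 1 → 2 := RKAux.one_to_two hunc hU hc hnt
  tfae_have 2 → 3 := RKAux.two_to_three hunc hU hc hnt
  tfae_have 3 → 4 := RKAux.three_to_four hunc
  tfae_have 4 → 1 := RKAux.four_to_one hunc hU hc hnt
  tfae_finish
end

section
/- Let κ be a measurable cardinal, U a non-trivial κ-complete ultrafilter over κ, W a normal ultrafilter over κ, and g : κ → κ a function with g_*(W) = U. Then U is Rowbottom. -/
section RowAux

variable {κ : Cardinal} {U W : Set (Set Ordinal)} {g : Ordinal → Ordinal}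
attribute [local instance] Classical.propDecidable

-- singleton complements are in U
lemma compl_singleton_mem_U (hU : IsUltrafilterOn κ U) (hnt : ¬ IsTrivialFilterOn κ U)
    {y : Ordinal} (hy : y < κ.ord) : Set.Iio κ.ord \ {y} ∈ U := by
  rcases hU.2 {y} (by simpa using hy) with h | h
  · exact absurd ⟨y, hy, h⟩ hnt
  · exact h

-- tails are in W
lemma tail_mem_W (hunc : Cardinal.aleph0 < κ) (hU : IsUltrafilterOn κ U)
    (hc : IsCompleteFilterOn κ κ U) (hnt : ¬ IsTrivialFilterOn κ U)
    (hW : IsUltrafilterOn κ W) (hg : ∀ x < κ.ord, g x < κ.ord)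
    (hproj : RKProj κ g W = U) {δ : Ordinal} (hδ : δ < κ.ord) :
    Set.Iio κ.ord \ Set.Iic δ ∈ W := by
  rcases hW.2 (Set.Iio κ.ord \ Set.Iic δ) (fun x hx => hx.1) with h | h
  · exact h
  exfalso
  have hIic : Set.Iic δ ∈ W := by
    have heq : Set.Iio κ.ord \ (Set.Iio κ.ord \ Set.Iic δ) = Set.Iio κ.ord ∩ Set.Iic δ := by
      ext x
      simp only [Set.mem_diff, Set.mem_inter_iff, Set.mem_Iio, Set.mem_Iic]
      tauto
    rw [heq] at h
    exact hW.1.2.2.2.2 _ h _ Set.inter_subset_right (fun x hx => lt_of_le_of_lt hx hδ)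
  have hδ1 : δ + 1 < κ.ord := by
    rw [Ordinal.add_one_eq_succ]
    exact (Cardinal.isSuccLimit_ord (le_of_lt hunc)).succ_lt hδ
  set o := δ + 1 with ho_def
  have hmkι : Cardinal.mk o.ToType < κ := by
    rw [Cardinal.mk_toType]; exact Cardinal.lt_ord.mp hδ1
  set e : o.ToType → Ordinal := fun i => (((Ordinal.ToType.mk (o := o))).symm i : Ordinal) with he_def
  have he_lt : ∀ i, e i < o := fun i => (((Ordinal.ToType.mk (o := o))).symm i).2
  set s : o.ToType → Set Ordinal := fun i => Set.Iio κ.ord \ {g (e i)} with hs_def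
  have hs : ∀ i, s i ∈ U := fun i =>
    compl_singleton_mem_U hU hnt (hg _ ((he_lt i).trans hδ1))
  have hZ : (Set.Iio κ.ord ∩ ⋂ i, s i) ∈ U := hc o.ToType s hmkι hs
  rw [← hproj] at hZ
  have hP : {x | x < κ.ord ∧ g x ∈ Set.Iio κ.ord ∩ ⋂ i, s i} ∈ W := hZ.2
  have hPI : ({x | x < κ.ord ∧ g x ∈ Set.Iio κ.ord ∩ ⋂ i, s i} ∩ Set.Iic δ) ∈ W :=
    hW.1.2.2.2.1 _ hP _ hIic
  have hempty : {x | x < κ.ord ∧ g x ∈ Set.Iio κ.ord ∩ ⋂ i, s i} ∩ Set.Iic δ = ∅ := by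
    ext x
    simp only [Set.mem_inter_iff, Set.mem_setOf_eq, Set.mem_Iic, Set.mem_empty_iff_false,
      iff_false, not_and]
    rintro ⟨hxκ, _, hxI⟩ hxδ
    have hxo : x < o := lt_of_le_of_lt hxδ (by rw [ho_def]; exact lt_add_one δ)
    set i := (Ordinal.ToType.mk (o := o)) ⟨x, hxo⟩ with hi_def
    have hei : e i = x := by
      rw [he_def]; simp [hi_def]
    have := Set.mem_iInter.mp hxI i
    rw [hs_def] at this
    simp only [Set.mem_diff, Set.mem_singleton_iff] at this
    exact this.2 (by rw [hei])
  rw [hempty] at hPI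
  exact hW.1.2.1 hPI
def diagInt (κ : Cardinal) (Y : Ordinal → Set Ordinal) : Set Ordinal :=
  {β | β < κ.ord ∧ ∀ α < β, β ∈ Y α}

lemma diag_mem (hW : IsUltrafilterOn κ W) (hWnorm : IsNormalFilterOn W)
    {Y : Ordinal → Set Ordinal} (hY : ∀ α, Y α ∈ W) : diagInt κ Y ∈ W := by
  rcases hW.2 (diagInt κ Y) (fun x hx => hx.1) with h | h
  · exact h
  exfalso
  set S : Ordinal → Set Ordinal := fun β => {α | α < β ∧ β ∉ Y α} with hS_def
  have hSne : ∀ β ∈ Set.Iio κ.ord \ diagInt κ Y, (S β).Nonempty := by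
    rintro β ⟨hβκ, hβd⟩
    by_contra hno
    rw [Set.not_nonempty_iff_eq_empty] at hno
    apply hβd
    refine ⟨hβκ, fun α hα => ?_⟩
    by_contra hmem
    have : α ∈ S β := ⟨hα, hmem⟩
    rw [hno] at this
    exact this
  set F : Ordinal → Ordinal := fun β =>
    if hne : (S β).Nonempty then wellFounded_lt.min (S β) hne else 0 with hF_def
  have hreg : ∀ β ∈ Set.Iio κ.ord \ diagInt κ Y, F β < β := by
    intro β hβ
    have hne := hSne β hβ
    simp only [hF_def, dif_pos hne]
    exact (wellFounded_lt.min_mem _ hne).1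
  obtain ⟨A', hA', hA'C, c, hcF⟩ := hWnorm _ h F hreg
  have h1 : A' ∩ Y c ∈ W := hW.1.2.2.2.1 _ hA' _ (hY c)
  have hempty : A' ∩ Y c = ∅ := by
    ext β
    simp only [Set.mem_inter_iff, Set.mem_empty_iff_false, iff_false, not_and]
    intro hβA' hβY
    have hne := hSne β (hA'C hβA')
    have hmin : F β ∈ S β := by
      simp only [hF_def, dif_pos hne]
      exact wellFounded_lt.min_mem _ hne
    rw [hcF β hβA'] at hmin
    exact hmin.2 hβY
  rw [hempty] at h1
  exact hW.1.2.1 h1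

lemma W_complete (hunc : Cardinal.aleph0 < κ) (hU : IsUltrafilterOn κ U)
    (hc : IsCompleteFilterOn κ κ U) (hnt : ¬ IsTrivialFilterOn κ U)
    (hW : IsUltrafilterOn κ W) (hWnorm : IsNormalFilterOn W)
    (hg : ∀ x < κ.ord, g x < κ.ord) (hproj : RKProj κ g W = U) :
    IsCompleteFilterOn κ κ W := by
  intro ι s hmk hs
  by_cases hempty : Nonempty ι
  case neg =>
    have : IsEmpty ι := not_nonempty_iff.mp hempty
    rw [Set.iInter_of_empty, Set.inter_univ]
    exact hW.1.2.2.1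
  set o := (Cardinal.mk ι).ord with ho_def
  have ho : o < κ.ord := Cardinal.ord_lt_ord.mpr hmk
  have hmk2 : Cardinal.mk ι = Cardinal.mk o.ToType := by
    rw [Cardinal.mk_toType, ho_def, Cardinal.card_ord]
  obtain ⟨eqv⟩ := Cardinal.eq.mp hmk2
  set f : ι → Ordinal := fun i => (((Ordinal.ToType.mk (o := o))).symm (eqv i) : Ordinal) with hf_def
  have hf_lt : ∀ i, f i < o := fun i => (((Ordinal.ToType.mk (o := o))).symm (eqv i)).2
  have hf_inj : Function.Injective f := by
    intro a b hab
    apply eqv.injective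
    apply ((Ordinal.ToType.mk (o := o))).symm.injective
    exact Subtype.ext hab
  set Y : Ordinal → Set Ordinal := fun α =>
    if h : ∃ i, f i = α then s h.choose else Set.Iio κ.ord with hY_def
  have hY : ∀ α, Y α ∈ W := by
    intro α
    by_cases h : ∃ i, f i = α
    · simp only [hY_def, dif_pos h]; exact hs _
    · simp only [hY_def, dif_neg h]; exact hW.1.2.2.1
  have hΔ := diag_mem hW hWnorm hY
  have hT := tail_mem_W hunc hU hc hnt hW hg hproj ho
  have hsub : diagInt κ Y ∩ (Set.Iio κ.ord \ Set.Iic o) ⊆ Set.Iio κ.ord ∩ ⋂ i, s i := by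
    rintro β ⟨⟨hβκ, hall⟩, ⟨_, hβo⟩⟩
    refine ⟨hβκ, Set.mem_iInter.mpr fun i => ?_⟩
    have hoβ : o < β := lt_of_not_ge (fun hle => hβo (le_trans hle (le_refl o)))
    have hfi : f i < β := (hf_lt i).trans hoβ
    have hmem := hall (f i) hfi
    have hex : ∃ j, f j = f i := ⟨i, rfl⟩
    simp only [hY_def, dif_pos hex] at hmem
    have : hex.choose = i := hf_inj hex.choose_spec
    rwa [this] at hmem
  exact hW.1.2.2.2.2 _ (hW.1.2.2.2.1 _ hΔ _ hT) _ hsub (fun x hx => hx.1)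

lemma small_const (hW : IsUltrafilterOn κ W) (hcomp : IsCompleteFilterOn κ κ W)
    {B : Set Ordinal} (hB : B ∈ W) (X : Type) (f : Ordinal → X) (hX : Cardinal.mk X < κ) :
    ∃ B' ∈ W, B' ⊆ B ∧ ∃ c, ∀ β ∈ B', f β = c := by
  by_cases hex : ∃ x, B ∩ f ⁻¹' {x} ∈ W
  · obtain ⟨x, hx⟩ := hex
    exact ⟨_, hx, Set.inter_subset_left, x, fun β hβ => hβ.2⟩
  push_neg at hex
  exfalso
  have hD : ∀ x : X, Set.Iio κ.ord \ (B ∩ f ⁻¹' {x}) ∈ W := by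
    intro x
    rcases hW.2 (B ∩ f ⁻¹' {x}) (fun y hy => hW.1.1 B hB hy.1) with h | h
    · exact absurd h (hex x)
    · exact h
  have hI := hcomp X _ hX hD
  have h2 : (Set.Iio κ.ord ∩ ⋂ x, Set.Iio κ.ord \ (B ∩ f ⁻¹' {x})) ∩ B ∈ W :=
    hW.1.2.2.2.1 _ hI _ hB
  have hempty : (Set.Iio κ.ord ∩ ⋂ x, Set.Iio κ.ord \ (B ∩ f ⁻¹' {x})) ∩ B = ∅ := by
    ext β
    simp only [Set.mem_inter_iff, Set.mem_empty_iff_false, iff_false, not_and]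
    rintro ⟨hβκ, hβI⟩ hβB
    have := Set.mem_iInter.mp hβI (f β)
    exact this.2 ⟨hβB, rfl⟩
  rw [hempty] at h2
  exact hW.1.2.1 h2

lemma exists_incseq (hW : IsUltrafilterOn κ W)
    (htail : ∀ δ < κ.ord, Set.Iio κ.ord \ Set.Iic δ ∈ W) :
    ∀ (n : ℕ) {B : Set Ordinal}, B ∈ W → ∀ α < κ.ord,
      ∃ u : List Ordinal, IsIncSeqFrom B u ∧ u.length = n ∧ ∀ x ∈ u, α < x := by
  intro n
  induction n with
  | zero =>
    intro B hB α hα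
    exact ⟨[], ⟨List.isChain_nil, by simp⟩, rfl, by simp⟩
  | succ n ih =>
    intro B hB α hα
    have hBt : B ∩ (Set.Iio κ.ord \ Set.Iic α) ∈ W := hW.1.2.2.2.1 _ hB _ (htail α hα)
    have hne : (B ∩ (Set.Iio κ.ord \ Set.Iic α)).Nonempty := by
      rcases Set.eq_empty_or_nonempty (B ∩ (Set.Iio κ.ord \ Set.Iic α)) with h | h
      · rw [h] at hBt; exact absurd hBt hW.1.2.1
      · exact h
    obtain ⟨β, hβB, hβκ, hβα⟩ := hne
    rw [Set.mem_Iic, not_le] at hβα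
    obtain ⟨u, ⟨hch, hmem⟩, hlen, hgt⟩ := ih hB β hβκ
    refine ⟨β :: u, ⟨?_, ?_⟩, by simp [hlen], ?_⟩
    · refine List.isChain_cons.mpr ?_
      refine ⟨fun y hy => ?_, hch⟩
      exact hgt y (List.mem_of_mem_head? hy)
    · intro x hx
      rcases List.mem_cons.mp hx with h | h
      · rw [h]; exact hβB
      · exact hmem x h
    · intro x hx
      rcases List.mem_cons.mp hx with h | h
      · rw [h]; exact hβα
      · exact hβα.trans (hgt x h)

lemma row_n (hunc : Cardinal.aleph0 < κ) (hW : IsUltrafilterOn κ W)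
    (hWnorm : IsNormalFilterOn W) (hcomp : IsCompleteFilterOn κ κ W)
    (htail : ∀ δ < κ.ord, Set.Iio κ.ord \ Set.Iic δ ∈ W) :
    ∀ (n : ℕ) {B : Set Ordinal}, B ∈ W → ∀ (X : Type) (H : List Ordinal → X),
      Cardinal.mk X < κ →
      ∃ B' ∈ W, B' ⊆ B ∧ ∀ s t : List Ordinal,
        IsIncSeqFrom B' s → s.length = n → IsIncSeqFrom B' t → t.length = n → H s = H t := by
  intro n
  induction n with
  | zero =>
    intro B hB X H _
    refine ⟨B, hB, subset_rfl, fun s t _ hls _ hlt => ?_⟩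
    rw [List.length_eq_zero_iff.mp hls, List.length_eq_zero_iff.mp hlt]
  | succ n ih =>
    intro B hB X H hX
    have hch : ∀ β : Ordinal, β < κ.ord →
        ∃ Bb ∈ W, Bb ⊆ B ∩ (Set.Iio κ.ord \ Set.Iic β) ∧ ∀ s t : List Ordinal,
          IsIncSeqFrom Bb s → s.length = n → IsIncSeqFrom Bb t → t.length = n →
            H (β :: s) = H (β :: t) := by
      intro β hβ
      exact ih (hW.1.2.2.2.1 _ hB _ (htail β hβ)) X (fun t => H (β :: t)) hX
    set D : Ordinal → Set Ordinal := fun β =>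
      if h : β < κ.ord then (hch β h).choose else Set.Iio κ.ord with hD_def
    have hD_mem : ∀ β, D β ∈ W := by
      intro β
      by_cases h : β < κ.ord
      · simp only [hD_def, dif_pos h]; exact (hch β h).choose_spec.1
      · simp only [hD_def, dif_neg h]; exact hW.1.2.2.1
    have hD_sub : ∀ β (h : β < κ.ord), D β ⊆ B ∩ (Set.Iio κ.ord \ Set.Iic β) := by
      intro β h
      simp only [hD_def, dif_pos h]
      exact (hch β h).choose_spec.2.1
    have hD_hom : ∀ β (h : β < κ.ord), ∀ s t : List Ordinal,
        IsIncSeqFrom (D β) s → s.length = n → IsIncSeqFrom (D β) t → t.length = n →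
          H (β :: s) = H (β :: t) := by
      intro β h
      simp only [hD_def, dif_pos h]
      exact (hch β h).choose_spec.2.2
    have h0κ : (0 : Ordinal) < κ.ord := by
      rw [Cardinal.lt_ord]
      simpa using (Cardinal.aleph0_pos.trans hunc)
    set useq : Ordinal → List Ordinal := fun β =>
      if h : β < κ.ord then (exists_incseq hW htail n (hD_mem β) 0 h0κ).choose else []
      with huseq_def
    have huseq : ∀ β, β < κ.ord → IsIncSeqFrom (D β) (useq β) ∧ (useq β).length = n := by
      intro β h
      simp only [huseq_def, dif_pos h]
      exact ⟨(exists_incseq hW htail n (hD_mem β) 0 h0κ).choose_spec.1,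
        (exists_incseq hW htail n (hD_mem β) 0 h0κ).choose_spec.2.1⟩
    set c : Ordinal → X := fun β => H (β :: useq β) with hc_def
    have hBstar : diagInt κ D ∩ B ∈ W := hW.1.2.2.2.1 _ (diag_mem hW hWnorm hD_mem) _ hB
    obtain ⟨B', hB'W, hB'sub, c₀, hc₀⟩ := small_const hW hcomp hBstar X c hX
    have key : ∀ s : List Ordinal, IsIncSeqFrom B' s → s.length = n + 1 → H s = c₀ := by
      intro s hs hls
      match s, hls with
      | β :: ts, hls =>
        have hβB' : β ∈ B' := hs.2 β (List.mem_cons_self)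
        have hβκ : β < κ.ord := (hB'sub hβB').1.1
        have hts_mem : ∀ x ∈ ts, x ∈ B' := fun x hx => hs.2 x (List.mem_cons_of_mem β hx)
        have hβlt : ∀ x ∈ ts, β < x := by
          have hpw := List.isChain_iff_pairwise.mp hs.1
          exact fun x hx => (List.pairwise_cons.mp hpw).1 x hx
        have hts_D : IsIncSeqFrom (D β) ts := by
          refine ⟨(List.isChain_cons.mp hs.1).2, fun x hx => ?_⟩
          have hxB' := hts_mem x hx
          have hxΔ : x ∈ diagInt κ D := (hB'sub hxB').1
          exact hxΔ.2 β (hβlt x hx)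
        have hlts : ts.length = n := by simpa using hls
        have h1 : H (β :: ts) = H (β :: useq β) :=
          hD_hom β hβκ ts (useq β) hts_D hlts (huseq β hβκ).1 (huseq β hβκ).2
        rw [h1]
        exact hc₀ β hβB'
    refine ⟨B', hB'W, fun x hx => (hB'sub hx).2, fun s t hss hsl hts htl => ?_⟩
    rw [key s hss hsl, key t hts htl]

lemma row_all (hunc : Cardinal.aleph0 < κ) (hW : IsUltrafilterOn κ W)
    (hWnorm : IsNormalFilterOn W) (hcomp : IsCompleteFilterOn κ κ W)
    (htail : ∀ δ < κ.ord, Set.Iio κ.ord \ Set.Iic δ ∈ W)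
    {B : Set Ordinal} (hB : B ∈ W) (X : Type) (H : List Ordinal → X)
    (hX : Cardinal.mk X < κ) :
    ∃ B' ∈ W, B' ⊆ B ∧ ∀ n : ℕ, ∀ s t : List Ordinal,
      IsIncSeqFrom B' s → s.length = n → IsIncSeqFrom B' t → t.length = n → H s = H t := by
  have hrow : ∀ n : ℕ, ∃ Bn ∈ W, Bn ⊆ B ∧ ∀ s t : List Ordinal,
      IsIncSeqFrom Bn s → s.length = n → IsIncSeqFrom Bn t → t.length = n → H s = H t :=
    fun n => row_n hunc hW hWnorm hcomp htail n hB X H hX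
  set Bn : ℕ → Set Ordinal := fun n => (hrow n).choose with hBn_def
  have hBn_mem : ∀ n, Bn n ∈ W := fun n => (hrow n).choose_spec.1
  have hBn_sub : ∀ n, Bn n ⊆ B := fun n => (hrow n).choose_spec.2.1
  have hBn_hom : ∀ n, ∀ s t : List Ordinal,
      IsIncSeqFrom (Bn n) s → s.length = n → IsIncSeqFrom (Bn n) t → t.length = n →
        H s = H t := fun n => (hrow n).choose_spec.2.2
  have hmkN : Cardinal.mk ℕ < κ := by rw [Cardinal.mk_nat]; exact hunc
  have hB' : (Set.Iio κ.ord ∩ ⋂ n, Bn n) ∈ W := hcomp ℕ Bn hmkN hBn_mem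
  refine ⟨_, hB', fun x hx => hBn_sub 0 (Set.mem_iInter.mp hx.2 0), fun n s t hs hsl ht htl => ?_⟩
  have hsub : (Set.Iio κ.ord ∩ ⋂ m, Bn m) ⊆ Bn n := fun x hx => Set.mem_iInter.mp hx.2 n
  exact hBn_hom n s t ⟨hs.1, fun x hx => hsub (hs.2 x hx)⟩ hsl
    ⟨ht.1, fun x hx => hsub (ht.2 x hx)⟩ htl


theorem rowbottom_aux
    (κ : Cardinal) (U W : Set (Set Ordinal)) (hunc : Cardinal.aleph0 < κ)
    (hU : IsUltrafilterOn κ U) (hc : IsCompleteFilterOn κ κ U)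
    (hnt : ¬ IsTrivialFilterOn κ U)
    (hW : IsUltrafilterOn κ W) (hWnorm : IsNormalFilterOn W)
    (g : Ordinal → Ordinal) (hg : ∀ x < κ.ord, g x < κ.ord)
    (hproj : RKProj κ g W = U) :
    ∀ A ∈ U, ∀ (X : Type) (F : List Ordinal → X), Cardinal.mk X < κ →
    ∃ A' ∈ U, A' ⊆ A ∧ ∀ n : ℕ, ∀ s t : List Ordinal,
      IsIncSeqFrom A' s → s.length = n → IsIncSeqFrom A' t → t.length = n → F s = F t := by
  have htail := fun δ (hδ : δ < κ.ord) => tail_mem_W hunc hU hc hnt hW hg hproj hδ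
  have hcomp := W_complete hunc hU hc hnt hW hWnorm hg hproj
  intro A hA X F hX
  have hB : {x | x < κ.ord ∧ g x ∈ A} ∈ W := by
    rw [← hproj] at hA; exact hA.2
  set sortL : List Ordinal → List Ordinal := fun l => l.insertionSort (· ≤ ·) with hsortL_def
  set H : List Ordinal → X := fun t => F (sortL (t.map g)) with hH_def
  obtain ⟨B', hB'W, hB'sub, hhom⟩ := row_all hunc hW hWnorm hcomp htail hB X H hX
  set A' : Set Ordinal := {α | α ∈ A ∧ ∃ β, β ∈ B' ∧ g β = α} with hA'_def
  have hA'U : A' ∈ U := by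
    rw [← hproj]
    refine ⟨fun α hα => hU.1.1 A hA hα.1, ?_⟩
    refine hW.1.2.2.2.2 B' hB'W _ ?_ (fun x hx => hx.1)
    intro β hβ
    exact ⟨hW.1.1 B' hB'W hβ, ⟨(hB'sub hβ).2, β, hβ, rfl⟩⟩
  refine ⟨A', hA'U, fun α hα => hα.1, ?_⟩
  set pick : Ordinal → Ordinal := fun α =>
    if h : ∃ β, β ∈ B' ∧ g β = α then h.choose else 0 with hpick_def
  have hpick : ∀ α ∈ A', pick α ∈ B' ∧ g (pick α) = α := by
    intro α hα
    have h : ∃ β, β ∈ B' ∧ g β = α := hα.2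
    simp only [hpick_def, dif_pos h]
    exact h.choose_spec
  have key : ∀ s : List Ordinal, IsIncSeqFrom A' s →
      ∃ u : List Ordinal, IsIncSeqFrom B' u ∧ u.length = s.length ∧ H u = F s := by
    intro s hs
    set u := sortL (s.map pick) with hu_def
    have hperm : List.Perm u (s.map pick) := List.perm_insertionSort _ _
    have hsorted : List.Pairwise (· ≤ ·) u := List.pairwise_insertionSort _ _
    have hlen : u.length = s.length := by
      rw [hperm.length_eq, List.length_map]
    have hmemu : ∀ x ∈ u, x ∈ B' := by
      intro x hx
      have := hperm.mem_iff.mp hx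
      obtain ⟨α, hαs, rfl⟩ := List.mem_map.mp this
      exact (hpick α (hs.2 α hαs)).1
    have hs_pw : s.Pairwise (· < ·) := List.isChain_iff_pairwise.mp hs.1
    have hs_nodup : s.Nodup := hs_pw.imp ne_of_lt
    have hmap_nodup : (s.map pick).Nodup := by
      refine hs_nodup.map_on ?_
      intro x hx y hy hxy
      have h1 := (hpick x (hs.2 x hx)).2
      have h2 := (hpick y (hs.2 y hy)).2
      rw [← h1, ← h2, hxy]
    have hu_nodup : u.Nodup := (hperm.nodup_iff).mpr hmap_nodup
    have hu_chain : u.Chain' (· < ·) := by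
      refine List.isChain_iff_pairwise.mpr ?_
      exact (hsorted.and hu_nodup).imp (fun h => lt_of_le_of_ne h.1 h.2)
    have hmapg : u.map g = s.map (fun α => g (pick α)) →
        True := fun _ => trivial
    have hmap_eq : (s.map pick).map g = s := by
      rw [List.map_map]
      have : ∀ α ∈ s, (g ∘ pick) α = α := fun α hα => (hpick α (hs.2 α hα)).2
      rw [List.map_congr_left this]
      exact List.map_id _
    have hpermg : List.Perm (u.map g) s := by
      have := hperm.map g
      rwa [hmap_eq] at this
    have hsortg : sortL (u.map g) = s := by
      have h1 : List.Pairwise (· ≤ ·) (sortL (u.map g)) := List.pairwise_insertionSort _ _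
      have h2 : List.Pairwise (· ≤ ·) s := hs_pw.imp le_of_lt
      exact ((List.perm_insertionSort _ _).trans hpermg).eq_of_pairwise' h1 h2
    refine ⟨u, ⟨hu_chain, hmemu⟩, hlen, ?_⟩
    rw [hH_def]
    simp only
    rw [hsortg]
  intro n s t hss hsl hts htl
  obtain ⟨us, hus, husl, husH⟩ := key s hss
  obtain ⟨ut, hut, hutl, hutH⟩ := key t hts
  rw [← husH, ← hutH]
  exact hhom n us ut hus (by rw [husl, hsl]) hut (by rw [hutl, htl])

end RowAux

/-- If `κ` is measurable, `U` is a non-trivial `κ`-complete ultrafilter over `κ`,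
`W` is a normal ultrafilter over `κ`, and `g : κ → κ` satisfies `g_*(W) = U`,
then `U` is Rowbottom. -/


theorem rowbottom_of_rkProj_normal
    (κ : Cardinal) (U W : Set (Set Ordinal)) (hunc : Cardinal.aleph0 < κ)
    (hU : IsUltrafilterOn κ U) (hc : IsCompleteFilterOn κ κ U)
    (hnt : ¬ IsTrivialFilterOn κ U)
    (hW : IsUltrafilterOn κ W) (hWnorm : IsNormalFilterOn W)
    (g : Ordinal → Ordinal) (hg : ∀ x < κ.ord, g x < κ.ord)
    (hproj : RKProj κ g W = U) :
    IsRowbottomFilterOn κ U := by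
  intro A hA X F hX
  exact rowbottom_aux κ U W hunc hU hc hnt hW hWnorm g hg hproj A hA X F hX
end

section
/- Let κ be an uncountable regular cardinal and U a filter over κ that contains all final segments, i.e. {α : λ < α < κ} ∈ U for every λ < κ. Then there exists a map i : P(U) → P*(U) such that: (a) i is order-preserving; (b) the image of i is dense in P*(U), i.e. every f ∈ P*(U) has an extension of the form i(p); and (c) two conditions p, q ∈ P(U) are compatible in P(U) if and only if i(p), i(q) are compatible in P*(U). -/
/-- A condition of the Prikry poset `P(U)`: a pair `⟨t, A⟩` where `t` is a finite
strictly increasing sequence of ordinals below `κ`, `A ∈ U`, and every element of `A`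
is greater than every element of `t`. -/
structure PrikryCond (κ : Cardinal) (U : Set (Set Ordinal)) where
  t : List Ordinal
  A : Set Ordinal
  inc : t.Chain' (· < ·)
  lt_ord : ∀ x ∈ t, x < κ.ord
  memU : A ∈ U
  sep : ∀ a ∈ A, ∀ x ∈ t, x < a

/-- The Prikry order (larger means stronger): `p ≤ q` iff the stem of `p` is an initial
segment of the stem of `q`, the new stem elements come from `A(p)`, and `A(q) ⊆ A(p)`. -/
def PrikryLE {κ : Cardinal} {U : Set (Set Ordinal)} (p q : PrikryCond κ U) : Prop :=
  p.t <+: q.t ∧ (∀ x ∈ q.t, x ∉ p.t → x ∈ p.A) ∧ q.A ⊆ p.A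


/-- A condition of the poset `P*(U)`: a partial function `f` from `κ` to `{0,1}`
(encoded with `Option Bool`, `none` meaning undefined) whose domain has complement
(inside `κ`) in `U`, and such that `f⁻¹[{1}]` is finite. -/
structure PStarCond (κ : Cardinal) (U : Set (Set Ordinal)) where
  f : Ordinal → Option Bool
  dom_sub : ∀ x : Ordinal, f x ≠ none → x < κ.ord
  compl_mem : {x : Ordinal | x < κ.ord ∧ f x = none} ∈ U
  fin : {x : Ordinal | f x = some true}.Finite

/-- The order on `P*(U)`: `g ≤ h` iff `h` extends `g` as a partial function. -/
def PStarLE {κ : Cardinal} {U : Set (Set Ordinal)} (g h : PStarCond κ U) : Prop :=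
  ∀ x : Ordinal, g.f x ≠ none → h.f x = g.f x


/-- Two sorted lists, one contained in the other with all new elements above, give a prefix. -/
theorem prefix_of_sorted : ∀ (l₂ l₁ : List Ordinal), l₁.Pairwise (· < ·) → l₂.Pairwise (· < ·) →
    (∀ x ∈ l₁, x ∈ l₂) → (∀ x ∈ l₂, x ∉ l₁ → ∀ y ∈ l₁, y < x) → l₁ <+: l₂
  | [], l₁, h₁, h₂, hsub, hsep => by
      cases l₁ with
      | nil => exact List.nil_prefix
      | cons a l => exact absurd (hsub a (by simp)) (by simp)
  | b :: l₂', l₁, h₁, h₂, hsub, hsep => by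
      cases l₁ with
      | nil => exact List.nil_prefix
      | cons a l₁' =>
        have hab : a = b := by
          rcases List.mem_cons.1 (hsub a List.mem_cons_self) with h | h
          · exact h
          · exfalso
            have hba : b < a := (List.pairwise_cons.1 h₂).1 a h
            by_cases hb : b ∈ a :: l₁'
            · rcases List.mem_cons.1 hb with rfl | hb'
              · exact lt_irrefl _ hba
              · exact asymm hba ((List.pairwise_cons.1 h₁).1 b hb')
            · exact asymm hba (hsep b List.mem_cons_self hb a List.mem_cons_self)
        subst hab
        have ih : l₁' <+: l₂' := by
          apply prefix_of_sorted l₂' l₁' (List.pairwise_cons.1 h₁).2 (List.pairwise_cons.1 h₂).2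
          · intro x hx
            rcases List.mem_cons.1 (hsub x (List.mem_cons_of_mem a hx)) with rfl | h
            · exact absurd ((List.pairwise_cons.1 h₁).1 x hx) (lt_irrefl x)
            · exact h
          · intro x hx hx' y hy
            have hbx : a < x := (List.pairwise_cons.1 h₂).1 x hx
            have hnx : x ∉ a :: l₁' := by
              intro h
              rcases List.mem_cons.1 h with rfl | h'
              · exact lt_irrefl _ hbx
              · exact hx' h'
            exact hsep x (List.mem_cons_of_mem a hx) hnx y (List.mem_cons_of_mem a hy)
        obtain ⟨u, hu⟩ := ih
        exact ⟨u, by simp [hu]⟩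

open Classical in
noncomputable def iMap {κ : Cardinal} {U : Set (Set Ordinal)} (hU : IsFilterOn κ U)
    (p : PrikryCond κ U) : PStarCond κ U where
  f x := if x ∈ p.t then some true else if x ∈ p.A then none
         else if x < κ.ord then some false else none
  dom_sub x hx := by
    by_cases h1 : x ∈ p.t
    · exact p.lt_ord x h1
    · by_cases h2 : x ∈ p.A
      · simp [h1, h2] at hx
      · by_cases h3 : x < κ.ord
        · exact h3
        · simp [h1, h2, h3] at hx
  compl_mem := by
    have hAt : ∀ x ∈ p.A, x ∉ p.t := fun x hx ht => lt_irrefl x (p.sep x hx x ht)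
    have : {x : Ordinal | x < κ.ord ∧
        (if x ∈ p.t then some true else if x ∈ p.A then none
         else if x < κ.ord then some false else none) = none} = p.A := by
      ext x
      constructor
      · rintro ⟨hxκ, hx⟩
        by_cases h1 : x ∈ p.t
        · simp [h1] at hx
        · by_cases h2 : x ∈ p.A
          · exact h2
          · simp [h1, h2, hxκ] at hx
      · intro hx
        exact ⟨hU.1 p.A p.memU hx, by simp [hAt x hx, hx]⟩
    rw [this]; exact p.memU
  fin := by
    have hAt : ∀ x ∈ p.A, x ∉ p.t := fun x hx ht => lt_irrefl x (p.sep x hx x ht)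
    apply Set.Finite.subset (List.finite_toSet p.t)
    intro x hx
    simp only [Set.mem_setOf_eq] at hx
    by_cases h1 : x ∈ p.t
    · exact h1
    · by_cases h2 : x ∈ p.A
      · simp [h1, h2] at hx
      · by_cases h3 : x < κ.ord <;> simp [h1, h2, h3] at hx

theorem iMap_mem {κ : Cardinal} {U : Set (Set Ordinal)} (hU : IsFilterOn κ U)
    (p : PrikryCond κ U) {x : Ordinal} (hx : x ∈ p.t) : (iMap hU p).f x = some true := by
  simp [iMap, hx]

theorem iMap_false {κ : Cardinal} {U : Set (Set Ordinal)} (hU : IsFilterOn κ U)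
    (p : PrikryCond κ U) {x : Ordinal} (hx : x ∉ p.t) (hA : x ∉ p.A) (hκ : x < κ.ord) :
    (iMap hU p).f x = some false := by
  simp [iMap, hx, hA, hκ]

theorem iMap_none {κ : Cardinal} {U : Set (Set Ordinal)} (hU : IsFilterOn κ U)
    (p : PrikryCond κ U) {x : Ordinal} (hA : x ∈ p.A) : (iMap hU p).f x = none := by
  have : x ∉ p.t := fun ht => lt_irrefl x (p.sep x hA x ht)
  simp [iMap, this, hA]

/-- common extension when one stem contains the other -/
theorem common_ext {κ : Cardinal} {U : Set (Set Ordinal)} (hU : IsFilterOn κ U)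
    (p q : PrikryCond κ U) (hsub : ∀ x ∈ q.t, x ∈ p.t)
    (hnew : ∀ x ∈ p.t, x ∉ q.t → x ∈ q.A) :
    ∃ r, PrikryLE p r ∧ PrikryLE q r := by
  refine ⟨⟨p.t, p.A ∩ q.A, p.inc, p.lt_ord, hU.2.2.2.1 _ p.memU _ q.memU,
    fun a ha x hx => p.sep a ha.1 x hx⟩, ?_, ?_⟩
  · exact ⟨List.prefix_refl _, fun x hx hx' => absurd hx hx', Set.inter_subset_left⟩
  · refine ⟨?_, fun x hx hx' => hnew x hx hx', Set.inter_subset_right⟩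
    apply prefix_of_sorted p.t q.t (List.isChain_iff_pairwise.1 q.inc)
      (List.isChain_iff_pairwise.1 p.inc) hsub
    intro x hx hx' y hy
    exact q.sep x (hnew x hx hx') y hy

/-- For an uncountable regular `κ` and a filter `U` over `κ` containing all final
segments, there is a map `i : P(U) → P*(U)` which is order-preserving, has dense image,
and preserves and reflects compatibility. -/
theorem prikry_equiv_pstar
    (κ : Cardinal) (hreg : κ.IsRegular) (hunc : Cardinal.aleph0 < κ)
    (U : Set (Set Ordinal)) (hU : IsFilterOn κ U)
    (hfin : ∀ lam < κ.ord, {α : Ordinal | lam < α ∧ α < κ.ord} ∈ U) :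
    ∃ i : PrikryCond κ U → PStarCond κ U,
      (∀ p q : PrikryCond κ U, PrikryLE p q → PStarLE (i p) (i q)) ∧
      (∀ f : PStarCond κ U, ∃ p : PrikryCond κ U, PStarLE f (i p)) ∧
      (∀ p q : PrikryCond κ U,
        (∃ r, PrikryLE p r ∧ PrikryLE q r) ↔ (∃ g, PStarLE (i p) g ∧ PStarLE (i q) g)) := by
  classical
  have mono : ∀ p q : PrikryCond κ U, PrikryLE p q → PStarLE (iMap hU p) (iMap hU q) := by
    rintro p q ⟨hpre, hnew, hAs⟩ x hx
    by_cases h1 : x ∈ p.t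
    · rw [iMap_mem hU q (hpre.subset h1), iMap_mem hU p h1]
    · by_cases h2 : x ∈ p.A
      · exact absurd (iMap_none hU p h2) hx
      · by_cases h3 : x < κ.ord
        · have hq1 : x ∉ q.t := fun h => h2 (hnew x h h1)
          have hq2 : x ∉ q.A := fun h => h2 (hAs h)
          rw [iMap_false hU q hq1 hq2 h3, iMap_false hU p h1 h2 h3]
        · exfalso; exact hx (by simp [iMap, h1, h2, h3])
  refine ⟨iMap hU, mono, ?_, ?_⟩
  · -- density
    intro f
    set S : Finset Ordinal := f.fin.toFinset with hS
    have hSκ : ∀ x ∈ S, x < κ.ord := by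
      intro x hx
      rw [hS, Set.Finite.mem_toFinset] at hx
      exact f.dom_sub x (by rw [Set.mem_setOf_eq] at hx; simp [hx])
    set lam : Ordinal := S.sup id with hlam
    have hlamκ : lam < κ.ord := by
      have h0 : (0 : Ordinal) < κ.ord := by
        have := Cardinal.ord_lt_ord.2 (Cardinal.aleph0_pos.trans hunc)
        simpa using this
      rw [hlam]
      exact Finset.sup_lt_iff h0 |>.2 fun x hx => hSκ x hx
    set A : Set Ordinal := {x : Ordinal | x < κ.ord ∧ f.f x = none} ∩
      {α : Ordinal | lam < α ∧ α < κ.ord} with hA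
    have hAU : A ∈ U := hU.2.2.2.1 _ f.compl_mem _ (hfin lam hlamκ)
    set t : List Ordinal := S.sort (· ≤ ·) with ht
    have htS : ∀ x, x ∈ t ↔ f.f x = some true := by
      intro x; rw [ht, Finset.mem_sort, hS, Set.Finite.mem_toFinset]; rfl
    refine ⟨⟨t, A, List.isChain_iff_pairwise.2 (S.sortedLT_sort.pairwise), ?_, hAU, ?_⟩, ?_⟩
    · intro x hx; exact hSκ x (Finset.mem_sort _ |>.1 hx)
    · rintro a ⟨_, hlt, _⟩ x hx
      exact lt_of_le_of_lt (Finset.le_sup (f := id) (Finset.mem_sort _ |>.1 hx)) hlt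
    · intro x hx
      rcases hfx : f.f x with _ | b
      · exact absurd hfx hx
      · cases b with
        | true => exact iMap_mem hU _ ((htS x).2 hfx)
        | false =>
          have h1 : x ∉ t := fun h => by
            have := (htS x).1 h; rw [hfx] at this; simp at this
          have h2 : x ∉ A := fun h => by
            rw [hA] at h
            have := h.1.2
            rw [hfx] at this
            simp at this
          exact iMap_false hU _ h1 h2 (f.dom_sub x (by simp [hfx]))
  · -- compatibility
    intro p q
    constructor
    · rintro ⟨r, hpr, hqr⟩
      exact ⟨iMap hU r, mono p r hpr, mono q r hqr⟩
    · rintro ⟨g, hpg, hqg⟩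
      have key : ∀ (a b : PrikryCond κ U), PStarLE (iMap hU a) g → PStarLE (iMap hU b) g →
          ∀ x ∈ a.t, x ∉ b.t → x ∈ b.A := by
        intro a b hag hbg x hx hxb
        by_contra hxA
        have h1 : g.f x = some true := by
          rw [hag x (by rw [iMap_mem hU a hx]; simp), iMap_mem hU a hx]
        have h2 : g.f x = some false := by
          rw [hbg x (by rw [iMap_false hU b hxb hxA (a.lt_ord x hx)]; simp),
            iMap_false hU b hxb hxA (a.lt_ord x hx)]
        rw [h1] at h2; simp at h2
      by_cases hc : ∀ x ∈ q.t, x ∈ p.t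
      · exact common_ext hU p q hc (fun x hx hx' => key p q hpg hqg x hx hx')
      · push_neg at hc
        obtain ⟨y, hyq, hyp⟩ := hc
        have hyA : y ∈ p.A := key q p hqg hpg y hyq hyp
        have hsub : ∀ x ∈ p.t, x ∈ q.t := by
          intro x hx
          by_contra hxq
          have hxA : x ∈ q.A := key p q hpg hqg x hx hxq
          exact absurd (q.sep x hxA y hyq) (asymm (p.sep y hyA x hx))
        obtain ⟨r, h1, h2⟩ := common_ext hU q p hsub (fun x hx hx' => key q p hqg hpg x hx hx')
        exact ⟨r, h2, h1⟩
end

section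
/- Let κ be a measurable cardinal and U a non-trivial κ-complete normal ultrafilter over κ. Let D ⊆ P(U) be dense and open. Then for every p ∈ P(U) there exist a condition p* with p ≤* p* and a natural number n such that for every increasing n-tuple α⃗ ∈ [A(p*)]^n, the condition p*⌢α⃗ belongs to D. -/
/-- The direct extension order: `p ≤* q` iff `p ≤ q` and the stems have equal length. -/
def PrikryLEStar {κ : Cardinal} {U : Set (Set Ordinal)} (p q : PrikryCond κ U) : Prop :=
  PrikryLE p q ∧ p.t.length = q.t.length

section aux
variable {κ : Cardinal} {U : Set (Set Ordinal)}

lemma diag_inter (hU : IsUltrafilterOn κ U) (hnorm : IsNormalFilterOn U)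
    (X : Ordinal → Set Ordinal) (hX : ∀ α, X α ∈ U) :
    {β | β < κ.ord ∧ ∀ α < β, β ∈ X α} ∈ U := by
  classical
  by_contra hΔ
  obtain ⟨⟨hsub, hne, hIio, hinter, hmono⟩, hult⟩ := hU
  have hΔsub : {β | β < κ.ord ∧ ∀ α < β, β ∈ X α} ⊆ Set.Iio κ.ord := fun β hβ => hβ.1
  have hC : Set.Iio κ.ord \ {β | β < κ.ord ∧ ∀ α < β, β ∈ X α} ∈ U := by
    rcases hult _ hΔsub with h | h
    · exact absurd h hΔ
    · exact h
  have hCex : ∀ β ∈ Set.Iio κ.ord \ {β | β < κ.ord ∧ ∀ α < β, β ∈ X α},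
      ∃ α, α < β ∧ β ∉ X α := by
    intro β hβ
    rcases hβ with ⟨h1, h2⟩
    simp only [Set.mem_setOf_eq, not_and, not_forall] at h2
    rcases h2 h1 with ⟨α, hα, hβα⟩
    exact ⟨α, hα, hβα⟩
  obtain ⟨A', hA'U, hA'C, c, hcc⟩ := hnorm _ hC
    (fun β => if h : ∃ α, α < β ∧ β ∉ X α then h.choose else 0)
    (fun β hβ => by
      show (if h : ∃ α, α < β ∧ β ∉ X α then h.choose else 0) < β
      rw [dif_pos (hCex β hβ)]; exact (hCex β hβ).choose_spec.1)
  have hmem : A' ∩ X c ∈ U := hinter _ hA'U _ (hX c)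
  rcases Set.eq_empty_or_nonempty (A' ∩ X c) with he | ⟨β, hβA, hβX⟩
  · rw [he] at hmem; exact hne hmem
  · have hx : ∃ α, α < β ∧ β ∉ X α := hCex β (hA'C hβA)
    have h2 : (if h : ∃ α, α < β ∧ β ∉ X α then h.choose else 0) = c := hcc β hβA
    rw [dif_pos hx] at h2
    exact (h2 ▸ hx.choose_spec.2) hβX

lemma seq_diag (hU : IsUltrafilterOn κ U) (hnorm : IsNormalFilterOn U) :
    ∀ (n : ℕ) (F : List Ordinal → Set Ordinal), (∀ s, F s ∈ U) →
    ∃ C ∈ U, ∀ s : List Ordinal, s.Pairwise (· < ·) → s.length = n →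
      (∀ x ∈ s, x ∈ C) → ∀ α ∈ C, (∀ x ∈ s, x < α) → α ∈ F s := by
  intro n
  induction n with
  | zero =>
    intro F hF
    refine ⟨F [], hF [], ?_⟩
    intro s _ hlen _ α hα _
    rw [List.length_eq_zero_iff.mp hlen]
    exact hα
  | succ n ih =>
    intro F hF
    classical
    choose Cg hCgU hCg using fun γ : Ordinal => ih (fun s => F (γ :: s)) (fun s => hF _)
    refine ⟨{β | β < κ.ord ∧ ∀ α < β, β ∈ Cg α}, diag_inter hU hnorm Cg hCgU, ?_⟩
    intro s hs hlen hmem α hα hαs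
    cases s with
    | nil => simp at hlen
    | cons γ s' =>
      have hγlt : ∀ x ∈ s', γ < x := (List.pairwise_cons.mp hs).1
      have hs'Cγ : ∀ x ∈ s', x ∈ Cg γ :=
        fun x hx => (hmem x (List.mem_cons_of_mem _ hx)).2 γ (hγlt x hx)
      have hαCγ : α ∈ Cg γ := hα.2 γ (hαs γ (List.mem_cons_self))
      exact hCg γ s' (List.pairwise_cons.mp hs).2 (by simpa using hlen) hs'Cγ α hαCγ
        (fun x hx => hαs x (List.mem_cons_of_mem _ hx))

lemma rowb (hU : IsUltrafilterOn κ U) (hnorm : IsNormalFilterOn U) :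
    ∀ (n : ℕ) (P : List Ordinal → Prop),
    ∃ H ∈ U, ∃ b : Prop, ∀ s : List Ordinal, s.Pairwise (· < ·) → s.length = n →
      (∀ x ∈ s, x ∈ H) → (P s ↔ b) := by
  intro n
  induction n with
  | zero =>
    intro P
    refine ⟨Set.Iio κ.ord, hU.1.2.2.1, P [], ?_⟩
    intro s _ hlen _
    rw [List.length_eq_zero_iff.mp hlen]
  | succ n ih =>
    intro P
    classical
    choose Hg hHgU bg hbg using fun γ : Ordinal => ih (fun s => P (γ :: s))
    have hΔU : {β | β < κ.ord ∧ ∀ α < β, β ∈ Hg α} ∈ U := diag_inter hU hnorm Hg hHgU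
    have hXsub : {γ | γ < κ.ord ∧ bg γ} ⊆ Set.Iio κ.ord := fun γ h => h.1
    have key : ∀ (Y : Set Ordinal),
        ∀ γ s', (γ :: s' : List Ordinal).Pairwise (· < ·) → s'.length = n →
        (∀ x ∈ γ :: s', x ∈ {β | β < κ.ord ∧ ∀ α < β, β ∈ Hg α} ∩ Y) →
        (P (γ :: s') ↔ bg γ) := by
      intro Y γ s' hs hlen hmem
      have hγlt : ∀ x ∈ s', γ < x := (List.pairwise_cons.mp hs).1
      exact hbg γ s' (List.pairwise_cons.mp hs).2 hlen
        (fun x hx => (hmem x (List.mem_cons_of_mem _ hx)).1.2 γ (hγlt x hx))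
    rcases hU.2 _ hXsub with hX | hX
    · refine ⟨_ ∩ {γ | γ < κ.ord ∧ bg γ}, hU.1.2.2.2.1 _ hΔU _ hX, True, ?_⟩
      intro s hs hlen hmem
      cases s with
      | nil => simp at hlen
      | cons γ s' =>
        rw [key _ γ s' hs (by simpa using hlen) hmem]
        exact iff_true_intro (hmem γ (List.mem_cons_self)).2.2
    · refine ⟨_ ∩ (Set.Iio κ.ord \ {γ | γ < κ.ord ∧ bg γ}), hU.1.2.2.2.1 _ hΔU _ hX, False, ?_⟩
      intro s hs hlen hmem
      cases s with
      | nil => simp at hlen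
      | cons γ s' =>
        rw [key _ γ s' hs (by simpa using hlen) hmem]
        have h1 := (hmem γ (List.mem_cons_self)).2
        refine iff_false_intro (fun hbγ => ?_)
        exact h1.2 ⟨h1.1, hbγ⟩

/-- The predicate: some condition in `D` has stem `t ++ s`. -/
def stemP (κ : Cardinal) (U : Set (Set Ordinal)) (D : Set (PrikryCond κ U))
    (t s : List Ordinal) : Prop :=
  ∃ r, r ∈ D ∧ r.t = t ++ s

open scoped Classical in
/-- A measure-one witness set for `stemP`, when it holds. -/
noncomputable def stemW (κ : Cardinal) (U : Set (Set Ordinal)) (D : Set (PrikryCond κ U))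
    (t s : List Ordinal) : Set Ordinal :=
  if h : stemP κ U D t s then h.choose.A else Set.Iio κ.ord

lemma stemW_memU (hIio : Set.Iio κ.ord ∈ U) (D : Set (PrikryCond κ U)) (t s : List Ordinal) :
    stemW κ U D t s ∈ U := by
  unfold stemW
  split
  · next h => exact h.choose.memU
  · exact hIio

lemma stemW_spec {D : Set (PrikryCond κ U)} {t s : List Ordinal}
    (h : stemP κ U D t s) :
    ∃ r, r ∈ D ∧ r.t = t ++ s ∧ r.A = stemW κ U D t s := by
  refine ⟨h.choose, h.choose_spec.1, h.choose_spec.2, ?_⟩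
  unfold stemW
  rw [dif_pos h]

end aux

/-- The strong Prikry property: for a normal measure `U` on a measurable cardinal `κ`
and a dense open `D ⊆ P(U)`, every `p` has a direct extension `p*` and a number `n`
such that `p*⌢α⃗ ∈ D` for every increasing `n`-tuple `α⃗` from `A(p*)`
(where `p*⌢α⃗ = ⟨t(p*)⌢α⃗, A(p*) ∖ (max α⃗ + 1)⟩`). -/
theorem prikry_strong_prikry_property
    (κ : Cardinal) (U : Set (Set Ordinal)) (hunc : Cardinal.aleph0 < κ)
    (hU : IsUltrafilterOn κ U) (hc : IsCompleteFilterOn κ κ U)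
    (hnt : ¬ IsTrivialFilterOn κ U) (hnorm : IsNormalFilterOn U)
    (D : Set (PrikryCond κ U))
    (hdense : ∀ p : PrikryCond κ U, ∃ q ∈ D, PrikryLE p q)
    (hopen : ∀ q ∈ D, ∀ r : PrikryCond κ U, PrikryLE q r → r ∈ D)
    (p : PrikryCond κ U) :
    ∃ p' : PrikryCond κ U, PrikryLEStar p p' ∧
      ∃ n : ℕ, ∀ s : List Ordinal,
        s.Chain' (· < ·) → s.length = n → (∀ x ∈ s, x ∈ p'.A) →
        ∀ q : PrikryCond κ U,
          q.t = p'.t ++ s → q.A = {x ∈ p'.A | ∀ y ∈ s, y < x} → q ∈ D := by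
  classical
  have hinter := hU.1.2.2.2.1
  have hIioU := hU.1.2.2.1
  -- per-length diagonal sets for the witness function
  choose C hCU hC using fun n : ℕ =>
    seq_diag hU hnorm n (stemW κ U D p.t) (fun s => stemW_memU hIioU D p.t s)
  -- per-length homogeneous sets for stemP
  choose H hHU b hb using fun n : ℕ => rowb hU hnorm n (stemP κ U D p.t)
  have hKU : ∀ n : ℕ, C n ∩ (p.A ∩ H n) ∈ U := fun n =>
    hinter _ (hCU n) _ (hinter _ p.memU _ (hHU n))
  have hAstarU : (Set.Iio κ.ord ∩ ⋂ n : ℕ, C n ∩ (p.A ∩ H n)) ∈ U := by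
    apply hc ℕ _ _ hKU
    rw [Cardinal.mk_nat]; exact hunc
  set Astar := Set.Iio κ.ord ∩ ⋂ n : ℕ, C n ∩ (p.A ∩ H n) with hAstardef
  have hApA : Astar ⊆ p.A := fun x hx => (Set.mem_iInter.mp hx.2 0).2.1
  have hAC : ∀ n, Astar ⊆ C n := fun n x hx => (Set.mem_iInter.mp hx.2 n).1
  have hAH : ∀ n, Astar ⊆ H n := fun n x hx => (Set.mem_iInter.mp hx.2 n).2.2
  -- the direct extension p'
  obtain ⟨q, hqD, hq⟩ := hdense
    ⟨p.t, Astar, p.inc, p.lt_ord, hAstarU, fun a ha x hx => p.sep a (hApA ha) x hx⟩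
  have hpre : p.t <+: q.t := hq.1
  obtain ⟨s₀, hs₀⟩ := hpre
  have hqpair : q.t.Pairwise (· < ·) := List.isChain_iff_pairwise.mp q.inc
  have hqpair' : (p.t ++ s₀).Pairwise (· < ·) := by rw [hs₀]; exact hqpair
  have hsplit : ∀ y ∈ p.t, ∀ x ∈ s₀, y < x :=
    fun y hy x hx => (List.pairwise_append.mp hqpair').2.2 y hy x hx
  have hs₀A : ∀ x ∈ s₀, x ∈ Astar := by
    intro x hx
    have hxq : x ∈ q.t := by rw [← hs₀]; exact List.mem_append_right _ hx
    have hnx : x ∉ p.t := fun hxp => lt_irrefl x (hsplit x hxp x hx)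
    exact hq.2.1 x hxq hnx
  have hs₀pair : s₀.Pairwise (· < ·) := (List.pairwise_append.mp hqpair').2.1
  refine ⟨⟨p.t, Astar, p.inc, p.lt_ord, hAstarU, fun a ha x hx => p.sep a (hApA ha) x hx⟩,
    ⟨⟨List.prefix_refl _, fun x hx hnx => absurd hx hnx, hApA⟩, rfl⟩, s₀.length, ?_⟩
  intro s hchain hlen hmem q' hq't hq'A
  have hmem' : ∀ x ∈ s, x ∈ Astar := hmem
  have hq't' : q'.t = p.t ++ s := hq't
  have hq'A' : q'.A = {x ∈ Astar | ∀ y ∈ s, y < x} := hq'A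
  have hspair : s.Pairwise (· < ·) := List.isChain_iff_pairwise.mp hchain
  -- stemP holds for s₀
  have hPs₀ : stemP κ U D p.t s₀ := ⟨q, hqD, hs₀.symm⟩
  -- homogeneity transfers it to s
  have hPs : stemP κ U D p.t s :=
    (hb s₀.length s hspair hlen (fun x hx => hAH _ (hmem' x hx))).mpr
      ((hb s₀.length s₀ hs₀pair rfl (fun x hx => hAH _ (hs₀A x hx))).mp hPs₀)
  obtain ⟨r₀, hr₀D, hr₀t, hr₀A⟩ := stemW_spec hPs
  -- q' is stronger than r₀
  have hsubA : q'.A ⊆ r₀.A := by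
    intro x hx
    rw [hq'A'] at hx
    have hxC : x ∈ C s₀.length := hAC _ hx.1
    have : x ∈ stemW κ U D p.t s :=
      hC s₀.length s hspair hlen (fun y hy => hAC _ (hmem' y hy)) x hxC hx.2
    rw [hr₀A]; exact this
  have hteq : r₀.t = q'.t := by rw [hr₀t, hq't']
  exact hopen r₀ hr₀D q' ⟨hteq ▸ List.prefix_refl _,
    fun x hx hnx => absurd (hteq ▸ hx) hnx, hsubA⟩
end
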